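/- arXiv:1806.02721 — 7 statements merged into one kernel-verified Lean document; each statement's English description precedes it below -/
import Mathlib

section
/- With the hypotheses of Lemma 2.1 (q'_j = b'q_i + 1, and ‖q'_jβ‖ < ‖q_{i-1}α‖ − b'‖q'_{j-1}β‖), the sum over all (n,m) with 0 ≤ n < q_i, 0 ≤ m < q'_j of the four gap values equals 1; explicitly, q_i q'_j(‖q_{i-1}α‖ − b'‖q'_{j-1}β‖) + q_{i-1}q'_j‖q_iα‖ − b'q'_{j-1}q_i‖q'_jβ‖ = 1. -/
noncomputable section

/-- distance from `t` to the nearest integer -/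
def nint (t : ℝ) : ℝ := |t - round t|

/-- iterates of the Gauss map -/
def gaussIter (α : ℝ) : ℕ → ℝ
  | 0 => α
  | k + 1 => (Int.fract (gaussIter α k))⁻¹

/-- partial quotients of `α`: `pquot α k` is `a_k` for `k ≥ 1` -/
def pquot (α : ℝ) (k : ℕ) : ℕ := (⌊gaussIter α k⌋).toNat

/-- the pair `(q_{k-1}, q_k)` of denominators of principal convergents of `α` -/
def qpair (α : ℝ) : ℕ → ℕ × ℕ
  | 0 => (0, 1)
  | k + 1 => ((qpair α k).2, pquot α (k + 1) * (qpair α k).2 + (qpair α k).1)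

/-- the denominator `q_k` of the `k`-th principal convergent of `α` -/
def qden (α : ℝ) (k : ℕ) : ℕ := (qpair α k).2

end

/-!
Let `g_k` be the Gauss iterates of `x` and `a_k = ⌊g_k⌋`. The products
`gap x k = ∏_{l<k} fract g_l` obey `gap x (k+2) = gap x k - a_{k+1} gap x (k+1)`, the recurrence
of the denominators `q_k` with the opposite sign, so the determinant
`q_k gap x k + q_{k-1} gap x (k+1)` stays equal to its initial value `1`. Moreover
`|q_k x - p_k| = gap x (k+1)` for suitable integers `p_k`, and by the determinant identity this is
at most `1/2` once `q_{k+1} ≥ 2`, so then it is `‖q_k x‖`. Substituting, the claimed sum is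
`q'_j (q_i ‖q_{i-1}α‖ + q_{i-1} ‖q_iα‖) - b' q_i (q'_j ‖q'_{j-1}β‖ + q'_{j-1} ‖q'_jβ‖)`,
which is `q'_j - b' q_i = 1`. The remaining case `q_i = 1` is excluded: then `q'_j = b' + 1`,
which forces `‖q'_jβ‖ + b' ‖q'_{j-1}β‖ ≥ 1/2 ≥ ‖q_{i-1}α‖`.
-/

theorem nint_eq_abs_sub_of_abs_sub_le_half {t : ℝ} {p : ℤ} (h : |t - p| ≤ 1 / 2) :
    nint t = |t - p| := by
  refine le_antisymm (round_le t p) ?_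
  by_cases hp : round t = p
  · rw [nint, hp]
  · have hsep : (1 : ℝ) ≤ |(round t : ℝ) - p| := by
      exact_mod_cast Int.one_le_abs (sub_ne_zero.2 hp)
    have htri := abs_sub_le (round t : ℝ) t p
    rw [abs_sub_comm (round t : ℝ) t] at htri
    rw [nint]
    linarith

theorem nint_le_half (t : ℝ) : nint t ≤ 1 / 2 := abs_sub_round t

section ContinuedFraction

variable {x : ℝ}

/-- `gap x (k + 1) = |q_k x - p_k|`; the shift makes `gap x 0 = 1 = |q_{-1} x - p_{-1}|`. -/
noncomputable def gap (x : ℝ) (k : ℕ) : ℝ := ∏ l ∈ Finset.range k, Int.fract (gaussIter x l)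

@[simp]
theorem gap_zero : gap x 0 = 1 := Finset.prod_range_zero _

theorem gap_succ (k : ℕ) : gap x (k + 1) = gap x k * Int.fract (gaussIter x k) :=
  Finset.prod_range_succ _ k

theorem gap_nonneg (k : ℕ) : 0 ≤ gap x k :=
  Finset.prod_nonneg fun _ _ => Int.fract_nonneg _

theorem gap_succ_le (k : ℕ) : gap x (k + 1) ≤ gap x k := by
  rw [gap_succ]
  exact mul_le_of_le_one_right (gap_nonneg k) (Int.fract_lt_one _).le

theorem gaussIter_succ (k : ℕ) : gaussIter x (k + 1) = (Int.fract (gaussIter x k))⁻¹ := rfl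

theorem Irrational.gaussIter (hx : Irrational x) (k : ℕ) : Irrational (gaussIter x k) := by
  induction k with
  | zero => exact hx
  | succ k ih => exact (ih.sub_intCast ⌊_⌋).inv

theorem fract_gaussIter_ne_zero (hx : Irrational x) (k : ℕ) : Int.fract (gaussIter x k) ≠ 0 :=
  Int.fract_ne_zero_iff.2 fun ⟨n, hn⟩ => (hx.gaussIter k).ne_int n hn.symm

theorem pquot_succ_cast (k : ℕ) : (pquot x (k + 1) : ℝ) = ⌊gaussIter x (k + 1)⌋ := by
  have h : 0 ≤ ⌊gaussIter x (k + 1)⌋ :=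
    Int.floor_nonneg.2 (inv_nonneg.2 (Int.fract_nonneg _))
  rw [pquot, ← Int.cast_natCast, Int.toNat_of_nonneg h]

theorem one_le_pquot_succ (hx : Irrational x) (k : ℕ) : 1 ≤ pquot x (k + 1) := by
  have hg : 1 ≤ gaussIter x (k + 1) :=
    one_le_inv₀ ((Int.fract_nonneg _).lt_of_ne' (fract_gaussIter_ne_zero hx k)) |>.2
      (Int.fract_lt_one _).le
  have : (1 : ℝ) ≤ pquot x (k + 1) := by
    rw [pquot_succ_cast]
    exact_mod_cast Int.le_floor.2 (by exact_mod_cast hg)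
  exact_mod_cast this

theorem gap_succ_mul_gaussIter_succ (hx : Irrational x) (k : ℕ) :
    gap x (k + 1) * gaussIter x (k + 1) = gap x k := by
  rw [gap_succ, gaussIter_succ, mul_assoc, mul_inv_cancel₀ (fract_gaussIter_ne_zero hx k),
    mul_one]

theorem gap_add_two (hx : Irrational x) (k : ℕ) :
    gap x (k + 2) = gap x k - pquot x (k + 1) * gap x (k + 1) := by
  rw [gap_succ, Int.fract, ← pquot_succ_cast, mul_sub, gap_succ_mul_gaussIter_succ hx, mul_comm]

theorem qden_add_two (k : ℕ) : qden x (k + 2) = pquot x (k + 2) * qden x (k + 1) + qden x k :=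
  rfl

theorem qden_le_qden_succ (hx : Irrational x) (k : ℕ) : qden x k ≤ qden x (k + 1) := by
  have h : qden x (k + 1) = pquot x (k + 1) * qden x k + (qpair x k).1 := rfl
  rw [h]
  nlinarith [one_le_pquot_succ hx k]

theorem one_le_qden (hx : Irrational x) (k : ℕ) : 1 ≤ qden x k :=
  monotone_nat_of_le_succ (qden_le_qden_succ hx) (Nat.zero_le k)

theorem two_le_qden_add_two (hx : Irrational x) (k : ℕ) : 2 ≤ qden x (k + 2) := by
  rw [qden_add_two]
  nlinarith [one_le_pquot_succ hx (k + 1), one_le_qden hx (k + 1), one_le_qden hx k]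

theorem qpair_snd_mul_gap_add_qpair_fst_mul_gap (hx : Irrational x) (k : ℕ) :
    ((qpair x k).2 : ℝ) * gap x k + ((qpair x k).1 : ℝ) * gap x (k + 1) = 1 := by
  induction k with
  | zero => simp [qpair]
  | succ k ih =>
    simp only [qpair, Nat.cast_add, Nat.cast_mul]
    rw [gap_add_two hx]
    linear_combination ih

theorem qden_mul_gap_add_qden_mul_gap (hx : Irrational x) (k : ℕ) :
    (qden x (k + 1) : ℝ) * gap x (k + 1) + (qden x k : ℝ) * gap x (k + 2) = 1 :=
  qpair_snd_mul_gap_add_qpair_fst_mul_gap hx (k + 1)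

theorem exists_qpair_mul_sub_int (hx : Irrational x) (k : ℕ) :
    ∃ p' p : ℤ, ((qpair x k).1 : ℝ) * x - p' = (-1) ^ (k + 1) * gap x k ∧
      ((qpair x k).2 : ℝ) * x - p = (-1) ^ k * gap x (k + 1) := by
  induction k with
  | zero => exact ⟨1, ⌊x⌋, by simp [qpair], by simp [qpair, gap_succ, gaussIter]⟩
  | succ k ih =>
    obtain ⟨p', p, h', h⟩ := ih
    refine ⟨p, pquot x (k + 1) * p + p', by simpa [qpair, pow_succ] using h, ?_⟩
    simp only [qpair, Nat.cast_add, Nat.cast_mul, Int.cast_add, Int.cast_mul, Int.cast_natCast]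
    rw [gap_add_two hx]
    linear_combination (pquot x (k + 1) : ℝ) * h + h'

theorem exists_abs_qden_mul_sub_int (hx : Irrational x) (k : ℕ) :
    ∃ p : ℤ, |(qden x k : ℝ) * x - p| = gap x (k + 1) := by
  obtain ⟨-, p, -, h⟩ := exists_qpair_mul_sub_int hx k
  exact ⟨p, by rw [qden, h, abs_mul, abs_pow, abs_neg, abs_one, one_pow, one_mul,
    abs_of_nonneg (gap_nonneg _)]⟩

theorem gap_succ_le_half (hx : Irrational x) {k : ℕ} (hq : 2 ≤ qden x (k + 1)) :
    gap x (k + 1) ≤ 1 / 2 := by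
  have hq' : (2 : ℝ) ≤ qden x (k + 1) := by exact_mod_cast hq
  nlinarith [qden_mul_gap_add_qden_mul_gap hx k, gap_nonneg (x := x) (k + 1),
    mul_nonneg (Nat.cast_nonneg (α := ℝ) (qden x k)) (gap_nonneg (x := x) (k + 2))]

theorem nint_qden_mul (hx : Irrational x) {k : ℕ} (hq : 2 ≤ qden x (k + 1)) :
    nint (qden x k * x) = gap x (k + 1) := by
  obtain ⟨p, hp⟩ := exists_abs_qden_mul_sub_int hx k
  rw [nint_eq_abs_sub_of_abs_sub_le_half (hp ▸ gap_succ_le_half hx hq), hp]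

theorem nint_qden_succ_mul (hx : Irrational x) (k : ℕ) :
    nint (qden x (k + 1) * x) = gap x (k + 2) :=
  nint_qden_mul hx (two_le_qden_add_two hx k)

theorem half_le_nint_qden_succ_mul_add (hx : Irrational x) {k b : ℕ} (hb : 1 ≤ b)
    (hq : qden x (k + 1) = b + 1) :
    1 / 2 ≤ nint (qden x (k + 1) * x) + b * nint (qden x k * x) := by
  rw [nint_qden_succ_mul hx, nint_qden_mul hx (by omega)]
  have hid := qden_mul_gap_add_qden_mul_gap hx k
  have hqk : (qden x k : ℝ) ≤ b + 1 := by exact_mod_cast hq ▸ qden_le_qden_succ hx k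
  rw [hq, Nat.cast_add, Nat.cast_one] at hid
  have hb' : (1 : ℝ) ≤ b := by exact_mod_cast hb
  nlinarith [gap_succ_le (x := x) (k + 1), gap_nonneg (x := x) (k + 2),
    mul_le_mul_of_nonneg_right hqk (gap_nonneg (x := x) (k + 2))]

end ContinuedFraction

theorem sum_of_gaps_equals_one_general (α β : ℝ)
    (hα : Irrational α) (hβ : Irrational β)
    (i j : ℕ) (hi : 1 ≤ i) (hj : 1 ≤ j) (b' : ℕ) (hb' : 0 < b')
    (hrel : qden β j = b' * qden α i + 1)
    (hass : nint ((qden β j : ℝ) * β)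
      < nint ((qden α (i - 1) : ℝ) * α) - (b' : ℝ) * nint ((qden β (j - 1) : ℝ) * β)) :
    (qden α i : ℝ) * (qden β j : ℝ)
        * (nint ((qden α (i - 1) : ℝ) * α) - (b' : ℝ) * nint ((qden β (j - 1) : ℝ) * β))
      + (qden α (i - 1) : ℝ) * (qden β j : ℝ) * nint ((qden α i : ℝ) * α)
      - (b' : ℝ) * (qden β (j - 1) : ℝ) * (qden α i : ℝ) * nint ((qden β j : ℝ) * β) = 1 := by
  obtain ⟨i, rfl⟩ : ∃ i', i = i' + 1 := ⟨i - 1, by omega⟩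
  obtain ⟨j, rfl⟩ : ∃ j', j = j' + 1 := ⟨j - 1, by omega⟩
  simp only [Nat.add_sub_cancel] at hass ⊢
  have hqα := one_le_qden hα (i + 1)
  have hqβ : 2 ≤ qden β (j + 1) := by rw [hrel]; nlinarith
  rcases Nat.lt_or_ge (qden α (i + 1)) 2 with hsmall | hqα2
  · have hβ_half := half_le_nint_qden_succ_mul_add hβ hb' (k := j)
      (by rw [hrel, show qden α (i + 1) = 1 by omega, mul_one])
    linarith [nint_le_half ((qden α i : ℝ) * α)]
  · have hrelR : (qden β (j + 1) : ℝ) = b' * qden α (i + 1) + 1 := by exact_mod_cast hrel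
    rw [nint_qden_mul hα hqα2, nint_qden_succ_mul hα, nint_qden_mul hβ hqβ, nint_qden_succ_mul hβ]
    linear_combination (qden β (j + 1) : ℝ) * qden_mul_gap_add_qden_mul_gap hα i
      - (b' : ℝ) * qden α (i + 1) * qden_mul_gap_add_qden_mul_gap hβ j + hrelR

theorem sum_of_gaps_equals_one (α β : ℝ)
    (hα0 : 0 < α) (hα1 : α < 1) (hβ0 : 0 < β) (hβ1 : β < 1)
    (hα : Irrational α) (hβ : Irrational β)
    (i j : ℕ) (hi : 1 ≤ i) (hj : 1 ≤ j) (b' : ℕ) (hb' : 0 < b')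
    (hrel : qden β j = b' * qden α i + 1)
    (hass : nint ((qden β j : ℝ) * β)
      < nint ((qden α (i - 1) : ℝ) * α) - (b' : ℝ) * nint ((qden β (j - 1) : ℝ) * β)) :
    (qden α i : ℝ) * (qden β j : ℝ)
        * (nint ((qden α (i - 1) : ℝ) * α) - (b' : ℝ) * nint ((qden β (j - 1) : ℝ) * β))
      + (qden α (i - 1) : ℝ) * (qden β j : ℝ) * nint ((qden α i : ℝ) * α)
      - (b' : ℝ) * (qden β (j - 1) : ℝ) * (qden α i : ℝ) * nint ((qden β j : ℝ) * β) = 1 :=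
  sum_of_gaps_equals_one_general α β hα hβ i j hi hj b' hb' hrel hass
end

section
/- Define sequences by q_{-1}=q'_{-1}=0, q_0=q'_0=1, q_1=3, q'_1=28, and inductively a_{k+1} = ((q_k)^6 + q_{k-1} − 1)b'_k + (q_k)^5, q_{k+1}=a_{k+1}q_k+q_{k-1}, b_{k+1}=(q_k)^6+q_{k-1}−1, a'_{k+1}=((q'_k)^6+q'_{k-1}−1)b_{k+1}+(q'_k)^5, q'_{k+1}=a'_{k+1}q'_k+q'_{k-1}, b'_{k+1}=(q'_k)^6+q'_{k-1}−1, with b'_1=9. Then for all k ≥ 1: q'_k = b'_k q_k + 1 and q_{k+1} = b_{k+1} q'_k + 1. -/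
/-! With `c = x * m + y - 1`, the partial quotient `a = c * b + m` gives
`a * x + y = c * (b * x + 1) + 1`, because `c + 1 = x * m + y`. Taking `m = x ^ 5` this is one step
of either recurrence, and the two relations of the theorem feed each other alternately. -/

theorem mul_add_eq_of_eq_mul_add {R : Type*} [CommRing R] {a b m x y : R}
    (ha : a = (x * m + y - 1) * b + m) : a * x + y = (x * m + y - 1) * (b * x + 1) + 1 := by
  subst ha; ring

theorem mul_add_eq_of_eq_pow_mul_add {R : Type*} [CommRing R] {a b x y : R}
    (ha : a = (x ^ 6 + y - 1) * b + x ^ 5) : a * x + y = (x ^ 6 + y - 1) * (b * x + 1) + 1 := by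
  rw [pow_succ'] at ha ⊢
  exact mul_add_eq_of_eq_mul_add ha

theorem construction_satisfies_relations_general (a a' b b' q q' : ℕ → ℤ)
    (hq1 : q 1 = 3) (hq'1 : q' 1 = 28) (hb'1 : b' 1 = 9)
    (ha : ∀ k, 1 ≤ k → a (k + 1) = ((q k) ^ 6 + q (k - 1) - 1) * b' k + (q k) ^ 5)
    (hq : ∀ k, 1 ≤ k → q (k + 1) = a (k + 1) * q k + q (k - 1))
    (hb : ∀ k, 1 ≤ k → b (k + 1) = (q k) ^ 6 + q (k - 1) - 1)
    (ha' : ∀ k, 1 ≤ k → a' (k + 1) = ((q' k) ^ 6 + q' (k - 1) - 1) * b (k + 1) + (q' k) ^ 5)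
    (hq' : ∀ k, 1 ≤ k → q' (k + 1) = a' (k + 1) * q' k + q' (k - 1))
    (hb' : ∀ k, 1 ≤ k → b' (k + 1) = (q' k) ^ 6 + q' (k - 1) - 1) :
    ∀ k, 1 ≤ k → q' k = b' k * q k + 1 ∧ q (k + 1) = b (k + 1) * q' k + 1 := by
  have hq_succ : ∀ k, 1 ≤ k → q' k = b' k * q k + 1 → q (k + 1) = b (k + 1) * q' k + 1 := by
    intro k hk h
    rw [hq k hk, mul_add_eq_of_eq_pow_mul_add (ha k hk), hb k hk, h]
  have hq'_succ : ∀ k, 1 ≤ k → q (k + 1) = b (k + 1) * q' k + 1 →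
      q' (k + 1) = b' (k + 1) * q (k + 1) + 1 := by
    intro k hk h
    rw [hq' k hk, mul_add_eq_of_eq_pow_mul_add (ha' k hk), hb' k hk, h]
  refine Nat.le_induction ?_ fun k hk ⟨_, h⟩ ↦ ?_
  · have h₁ : q' 1 = b' 1 * q 1 + 1 := by rw [hq'1, hb'1, hq1]; norm_num
    exact ⟨h₁, hq_succ 1 le_rfl h₁⟩
  · have h' := hq'_succ k hk h
    exact ⟨h', hq_succ (k + 1) (by omega) h'⟩

theorem construction_satisfies_relations (a a' b b' q q' : ℕ → ℤ)
    (hq0 : q 0 = 1) (hq1 : q 1 = 3) (hq'0 : q' 0 = 1) (hq'1 : q' 1 = 28) (hb'1 : b' 1 = 9)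
    (ha : ∀ k, 1 ≤ k → a (k + 1) = ((q k) ^ 6 + q (k - 1) - 1) * b' k + (q k) ^ 5)
    (hq : ∀ k, 1 ≤ k → q (k + 1) = a (k + 1) * q k + q (k - 1))
    (hb : ∀ k, 1 ≤ k → b (k + 1) = (q k) ^ 6 + q (k - 1) - 1)
    (ha' : ∀ k, 1 ≤ k → a' (k + 1) = ((q' k) ^ 6 + q' (k - 1) - 1) * b (k + 1) + (q' k) ^ 5)
    (hq' : ∀ k, 1 ≤ k → q' (k + 1) = a' (k + 1) * q' k + q' (k - 1))
    (hb' : ∀ k, 1 ≤ k → b' (k + 1) = (q' k) ^ 6 + q' (k - 1) - 1) :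
    ∀ k, 1 ≤ k → q' k = b' k * q k + 1 ∧ q (k + 1) = b (k + 1) * q' k + 1 :=
  construction_satisfies_relations_general a a' b b' q q' hq1 hq'1 hb'1 ha hq hb ha' hq' hb'
end

section
/- With the sequences of the construction above, for all k ≥ 1, q_k < b'_k < (q_k)^3 and q'_k < b_{k+1} < (q'_k)^3. -/
/-!
Read the two families as one chain `q₁ < q'₁ < q₂ < q'₂ < ⋯` in which each term is `c x + 1`
for its predecessor `x` and a multiplier `c`: once `q'_k = b'_k q_k + 1` is known, the recurrence
`q_{k+1} = a_{k+1} q_k + q_{k-1}` collapses to `q_{k+1} = b_{k+1} q'_k + 1`, and symmetrically for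
`q'_{k+1}`. The bounds then propagate along the chain: if `0 < w < x < c < x³`, then
`y = c x + 1` and `d = x⁶ + w - 1` satisfy `x < y < d < y³`, because `y ≤ x⁴ - x + 1` and
`d < x⁶ + x < (x² + x + 1)³ ≤ y³`. Apply this alternately to `(q_{k-1}, q_k, b'_k)` and to
`(q'_{k-1}, q'_k, b_{k+1})`.
-/

theorem eq_mul_add_one_of_recurrence {x w c y d A z : ℤ} (hy : y = c * x + 1)
    (hd : d = x ^ 6 + w - 1) (hA : A = (x ^ 6 + w - 1) * c + x ^ 5) (hz : z = A * x + w) :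
    z = d * y + 1 := by
  subst hy hd hA hz
  ring

theorem lt_mul_add_one_lt_pow_six_add_sub_one_lt_cube {w x c y d : ℤ} (hw : 0 < w)
    (hwx : w < x) (hxc : x < c) (hcx : c < x ^ 3) (hy : y = c * x + 1)
    (hd : d = x ^ 6 + w - 1) : x < y ∧ y < d ∧ d < y ^ 3 := by
  subst hy hd
  have hx : 2 ≤ x := by omega
  refine ⟨by nlinarith, ?_, ?_⟩
  · have hy : c * x + 1 ≤ x ^ 4 - x + 1 := by nlinarith
    have hx2 : 4 ≤ x ^ 2 := by nlinarith
    nlinarith [mul_le_mul_of_nonneg_left hx2 (pow_nonneg (by omega : (0 : ℤ) ≤ x) 4)]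
  · calc x ^ 6 + w - 1 < (x ^ 2 + x + 1) ^ 3 := by
          nlinarith [pow_pos (by omega : (0 : ℤ) < x) 5, pow_pos (by omega : (0 : ℤ) < x) 4,
            pow_pos (by omega : (0 : ℤ) < x) 3]
      _ ≤ (c * x + 1) ^ 3 := by gcongr; nlinarith

theorem construction_eq_mul_add_one {a a' b b' q q' : ℕ → ℤ}
    (hq1 : q 1 = 3) (hq'1 : q' 1 = 28) (hb'1 : b' 1 = 9)
    (ha : ∀ k, 1 ≤ k → a (k + 1) = ((q k) ^ 6 + q (k - 1) - 1) * b' k + (q k) ^ 5)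
    (hq : ∀ k, 1 ≤ k → q (k + 1) = a (k + 1) * q k + q (k - 1))
    (hb : ∀ k, 1 ≤ k → b (k + 1) = (q k) ^ 6 + q (k - 1) - 1)
    (ha' : ∀ k, 1 ≤ k → a' (k + 1) = ((q' k) ^ 6 + q' (k - 1) - 1) * b (k + 1) + (q' k) ^ 5)
    (hq' : ∀ k, 1 ≤ k → q' (k + 1) = a' (k + 1) * q' k + q' (k - 1))
    (hb' : ∀ k, 1 ≤ k → b' (k + 1) = (q' k) ^ 6 + q' (k - 1) - 1) :
    ∀ k, 1 ≤ k → q' k = b' k * q k + 1 ∧ q (k + 1) = b (k + 1) * q' k + 1 := by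
  intro k hk
  induction k, hk using Nat.le_induction with
  | base =>
    have h : q' 1 = b' 1 * q 1 + 1 := by rw [hq'1, hb'1, hq1]; norm_num
    exact ⟨h, eq_mul_add_one_of_recurrence h (hb 1 le_rfl) (ha 1 le_rfl) (hq 1 le_rfl)⟩
  | succ k hk ih =>
    have h := eq_mul_add_one_of_recurrence ih.2 (hb' k hk) (ha' k hk) (hq' k hk)
    exact ⟨h, eq_mul_add_one_of_recurrence h (hb (k + 1) (by omega)) (ha (k + 1) (by omega))
      (hq (k + 1) (by omega))⟩

theorem construction_chain_bounds {b b' q q' : ℕ → ℤ}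
    (hq0 : q 0 = 1) (hq1 : q 1 = 3) (hq'0 : q' 0 = 1) (hb'1 : b' 1 = 9)
    (hb : ∀ k, 1 ≤ k → b (k + 1) = (q k) ^ 6 + q (k - 1) - 1)
    (hb' : ∀ k, 1 ≤ k → b' (k + 1) = (q' k) ^ 6 + q' (k - 1) - 1)
    (hq'q : ∀ k, 1 ≤ k → q' k = b' k * q k + 1)
    (hqq' : ∀ k, 1 ≤ k → q (k + 1) = b (k + 1) * q' k + 1) :
    ∀ k, 1 ≤ k → 0 < q (k - 1) ∧ q (k - 1) ≤ q' (k - 1) ∧ q' (k - 1) < q k ∧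
      q k < b' k ∧ b' k < q k ^ 3 := by
  intro k hk
  induction k, hk using Nat.le_induction with
  | base => simp only [Nat.sub_self, hq0, hq'0, hq1, hb'1]; norm_num
  | succ k hk ih =>
    rw [Nat.add_sub_cancel]
    obtain ⟨hw, hww', hw'x, hxc, hcx⟩ := ih
    obtain ⟨hxy, hyd, hdy⟩ := lt_mul_add_one_lt_pow_six_add_sub_one_lt_cube hw (by omega)
      hxc hcx (hq'q k hk) (hb k hk)
    obtain ⟨hyz, hze, hez⟩ := lt_mul_add_one_lt_pow_six_add_sub_one_lt_cube (by omega)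
      (by omega) hyd hdy (hqq' k hk) (hb' k hk)
    exact ⟨by omega, hxy.le, hyz, hze, hez⟩

theorem construction_b_bounds (a a' b b' q q' : ℕ → ℤ)
    (hq0 : q 0 = 1) (hq1 : q 1 = 3) (hq'0 : q' 0 = 1) (hq'1 : q' 1 = 28) (hb'1 : b' 1 = 9)
    (ha : ∀ k, 1 ≤ k → a (k + 1) = ((q k) ^ 6 + q (k - 1) - 1) * b' k + (q k) ^ 5)
    (hq : ∀ k, 1 ≤ k → q (k + 1) = a (k + 1) * q k + q (k - 1))
    (hb : ∀ k, 1 ≤ k → b (k + 1) = (q k) ^ 6 + q (k - 1) - 1)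
    (ha' : ∀ k, 1 ≤ k → a' (k + 1) = ((q' k) ^ 6 + q' (k - 1) - 1) * b (k + 1) + (q' k) ^ 5)
    (hq' : ∀ k, 1 ≤ k → q' (k + 1) = a' (k + 1) * q' k + q' (k - 1))
    (hb' : ∀ k, 1 ≤ k → b' (k + 1) = (q' k) ^ 6 + q' (k - 1) - 1) :
    ∀ k, 1 ≤ k → q k < b' k ∧ b' k < (q k) ^ 3 ∧ q' k < b (k + 1) ∧ b (k + 1) < (q' k) ^ 3 := by
  have hrec := construction_eq_mul_add_one hq1 hq'1 hb'1 ha hq hb ha' hq' hb'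
  intro k hk
  obtain ⟨hw, hww', hw'x, hxc, hcx⟩ := construction_chain_bounds hq0 hq1 hq'0 hb'1 hb hb'
    (fun k hk => (hrec k hk).1) (fun k hk => (hrec k hk).2) k hk
  obtain ⟨-, hyd, hdy⟩ := lt_mul_add_one_lt_pow_six_add_sub_one_lt_cube hw (by omega) hxc hcx
    (hrec k hk).1 (hb k hk)
  exact ⟨hxc, hcx, hyd, hdy⟩
end

section
/- Let α, β be irrational with convergent denominators (q_k), (q'_k). If for every pair of nonzero integers (n₁, n₂) there exists k with |n₁| < q_{k+1}/q'_k and |n₂| < q'_{k+1}‖q_kα‖, then 1, α, β are rationally independent. -/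
namespace CFAux

/-- numerators `(p_{k-1}, p_k)` -/
noncomputable def pp (α : ℝ) : ℕ → ℤ × ℤ
  | 0 => (1, ⌊α⌋)
  | k + 1 => ((pp α k).2, (pquot α (k + 1) : ℤ) * (pp α k).2 + (pp α k).1)

variable {α : ℝ}

lemma gauss_irrational (hα : Irrational α) : ∀ k, Irrational (gaussIter α k)
  | 0 => hα
  | k + 1 => by
    have ih := gauss_irrational hα k
    have h1 : Irrational (Int.fract (gaussIter α k)) := by
      unfold Int.fract
      exact Irrational.sub_intCast ih _
    exact h1.inv

lemma fract_pos (hα : Irrational α) (k : ℕ) : 0 < Int.fract (gaussIter α k) := by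
  rcases (Int.fract_nonneg (gaussIter α k)).lt_or_eq with h | h
  · exact h
  · exfalso
    have : gaussIter α k = (⌊gaussIter α k⌋ : ℝ) := by
      have := h.symm
      unfold Int.fract at this
      linarith
    exact (gauss_irrational hα k).ne_int _ this

lemma gauss_gt_one (hα : Irrational α) (k : ℕ) : 1 < gaussIter α (k + 1) := by
  show 1 < (Int.fract (gaussIter α k))⁻¹
  rw [lt_inv_comm₀ one_pos (fract_pos hα k)]
  simpa using (Int.fract_lt_one (gaussIter α k))

lemma pquot_pos (hα : Irrational α) (k : ℕ) : 1 ≤ pquot α (k + 1) := by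
  unfold pquot
  have h := gauss_gt_one hα k
  have : (1 : ℤ) ≤ ⌊gaussIter α (k + 1)⌋ := by
    rw [Int.le_floor]; push_cast; linarith
  omega

lemma pquot_cast (hα : Irrational α) (k : ℕ) :
    ((pquot α (k + 1) : ℤ) : ℝ) = (⌊gaussIter α (k + 1)⌋ : ℝ) := by
  unfold pquot
  have h := gauss_gt_one hα k
  have : (1 : ℤ) ≤ ⌊gaussIter α (k + 1)⌋ := by
    rw [Int.le_floor]; push_cast; linarith
  congr 1
  omega

lemma pquot_lt_gauss (hα : Irrational α) (k : ℕ) :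
    ((pquot α (k + 1) : ℝ)) < gaussIter α (k + 1) := by
  have h1 : ((pquot α (k + 1) : ℤ) : ℝ) = _ := pquot_cast hα k
  push_cast at h1
  rw [h1]
  rcases (Int.floor_le (gaussIter α (k + 1))).lt_or_eq with h | h
  · exact h
  · exact absurd h.symm ((gauss_irrational hα (k + 1)).ne_int _)

lemma gauss_rec (hα : Irrational α) (k : ℕ) :
    gaussIter α (k + 1) = (pquot α (k + 1) : ℝ) + (gaussIter α (k + 2))⁻¹ := by
  have h1 : ((pquot α (k + 1) : ℤ) : ℝ) = _ := pquot_cast hα k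
  have h2 : gaussIter α (k + 2) = (Int.fract (gaussIter α (k + 1)))⁻¹ := rfl
  have h3 : 0 < Int.fract (gaussIter α (k + 1)) := fract_pos hα (k + 1)
  rw [h2, inv_inv]
  push_cast at h1
  rw [h1]
  unfold Int.fract
  ring

lemma q_pos (hα : Irrational α) : ∀ k, 1 ≤ (qpair α k).2
  | 0 => le_refl 1
  | k + 1 => by
    have ih := q_pos hα k
    have h := pquot_pos hα k
    show 1 ≤ pquot α (k + 1) * (qpair α k).2 + (qpair α k).1
    nlinarith

end CFAux

namespace CFAux
variable {α : ℝ}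

lemma key (hα : Irrational α) : ∀ k : ℕ,
    α * (((qpair α k).2 : ℝ) * gaussIter α (k + 1) + ((qpair α k).1 : ℝ)) =
      ((pp α k).2 : ℝ) * gaussIter α (k + 1) + ((pp α k).1 : ℝ)
  | 0 => by
    show α * ((1 : ℕ) * gaussIter α 1 + ((0 : ℕ) : ℝ)) = (⌊α⌋ : ℝ) * gaussIter α 1 + ((1 : ℤ) : ℝ)
    have h1 : gaussIter α 1 = (Int.fract α)⁻¹ := rfl
    have h2 : 0 < Int.fract α := fract_pos hα 0
    have h3 : Int.fract α = α - ⌊α⌋ := rfl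
    push_cast
    rw [h1, h3]
    have h4 : α - ⌊α⌋ ≠ 0 := by rw [← h3]; exact h2.ne'
    field_simp
    ring
  | k + 1 => by
    have ih := key hα k
    have hg := gauss_rec hα k
    have hgt := gauss_gt_one hα (k + 1)
    have hne : gaussIter α (k + 2) ≠ 0 := by linarith
    have hq2 : ((qpair α (k + 1)).2 : ℝ) =
        (pquot α (k + 1) : ℝ) * ((qpair α k).2 : ℝ) + ((qpair α k).1 : ℝ) := by
      show (((pquot α (k + 1) * (qpair α k).2 + (qpair α k).1 : ℕ)) : ℝ) = _
      push_cast; ring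
    have hq1 : ((qpair α (k + 1)).1 : ℝ) = ((qpair α k).2 : ℝ) := rfl
    have hp2 : ((pp α (k + 1)).2 : ℝ) =
        (pquot α (k + 1) : ℝ) * ((pp α k).2 : ℝ) + ((pp α k).1 : ℝ) := by
      show (((pquot α (k + 1) : ℤ) * (pp α k).2 + (pp α k).1 : ℤ) : ℝ) = _
      push_cast; ring
    have hp1 : ((pp α (k + 1)).1 : ℝ) = ((pp α k).2 : ℝ) := rfl
    rw [hq2, hq1, hp2, hp1]
    rw [hg] at ih
    field_simp at ih ⊢
    ring_nf at ih ⊢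
    try linarith
    try linear_combination ih

lemma det (α : ℝ) : ∀ k : ℕ,
    (pp α k).2 * ((qpair α k).1 : ℤ) - (pp α k).1 * ((qpair α k).2 : ℤ) = (-1) ^ (k + 1)
  | 0 => by
    show ⌊α⌋ * ((0 : ℕ) : ℤ) - 1 * ((1 : ℕ) : ℤ) = (-1) ^ (0 + 1)
    norm_num
  | k + 1 => by
    have ih := det α k
    have hq2 : ((qpair α (k + 1)).2 : ℤ) =
        (pquot α (k + 1) : ℤ) * ((qpair α k).2 : ℤ) + ((qpair α k).1 : ℤ) := by
      show (((pquot α (k + 1) * (qpair α k).2 + (qpair α k).1 : ℕ)) : ℤ) = _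
      push_cast; ring
    have hq1 : ((qpair α (k + 1)).1 : ℤ) = ((qpair α k).2 : ℤ) := rfl
    have hp2 : (pp α (k + 1)).2 = (pquot α (k + 1) : ℤ) * (pp α k).2 + (pp α k).1 := rfl
    have hp1 : (pp α (k + 1)).1 = (pp α k).2 := rfl
    rw [hq2, hq1, hp2, hp1]
    have : (-1 : ℤ) ^ (k + 2) = -(-1) ^ (k + 1) := by ring
    rw [this, ← ih]
    ring

/-- `E k = q_k g_{k+1} + q_{k-1}`, the denominator of `D_k`. -/
noncomputable def E (α : ℝ) (k : ℕ) : ℝ :=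
  ((qpair α k).2 : ℝ) * gaussIter α (k + 1) + ((qpair α k).1 : ℝ)

lemma E_gt (hα : Irrational α) (k : ℕ) : ((qpair α (k + 1)).2 : ℝ) < E α k := by
  unfold E
  have h1 := pquot_lt_gauss hα k
  have h2 := q_pos hα k
  have hq2 : ((qpair α (k + 1)).2 : ℝ) =
      (pquot α (k + 1) : ℝ) * ((qpair α k).2 : ℝ) + ((qpair α k).1 : ℝ) := by
    show (((pquot α (k + 1) * (qpair α k).2 + (qpair α k).1 : ℕ)) : ℝ) = _
    push_cast; ring
  rw [hq2]
  have h3 : (1 : ℝ) ≤ ((qpair α k).2 : ℝ) := by exact_mod_cast h2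
  nlinarith

lemma E_pos (hα : Irrational α) (k : ℕ) : 0 < E α k := by
  have h := E_gt hα k
  have h2 : (1 : ℝ) ≤ ((qpair α (k + 1)).2 : ℝ) := by exact_mod_cast q_pos hα (k + 1)
  linarith

/-- `D_k = q_k α - p_k` -/
noncomputable def D (α : ℝ) (k : ℕ) : ℝ := ((qpair α k).2 : ℝ) * α - ((pp α k).2 : ℝ)

lemma D_mul (hα : Irrational α) (k : ℕ) : D α k * E α k = (-1) ^ k := by
  have h1 := key hα k
  have h2 : ((pp α k).2 : ℝ) * ((qpair α k).1 : ℝ) - ((pp α k).1 : ℝ) * ((qpair α k).2 : ℝ)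
      = (-1) ^ (k + 1) := by exact_mod_cast det α k
  unfold D E
  have : (-1 : ℝ) ^ (k + 1) = -(-1) ^ k := by ring
  rw [this] at h2
  linear_combination ((qpair α k).2 : ℝ) * h1 - h2

lemma D_abs (hα : Irrational α) (k : ℕ) : |D α k| = 1 / E α k := by
  have h1 := D_mul hα k
  have h2 := E_pos hα k
  have h3 : |D α k * E α k| = 1 := by rw [h1]; simp [abs_pow]
  rw [abs_mul, abs_of_pos h2] at h3
  field_simp
  linarith

lemma D_abs_lt (hα : Irrational α) (k : ℕ) : |D α k| < 1 / ((qpair α (k + 1)).2 : ℝ) := by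
  rw [D_abs hα k]
  have h1 := E_gt hα k
  have h2 : (0 : ℝ) < ((qpair α (k + 1)).2 : ℝ) := by
    exact_mod_cast Nat.lt_of_lt_of_le Nat.zero_lt_one (q_pos hα (k + 1))
  exact one_div_lt_one_div_of_lt h2 h1

lemma D_sign (hα : Irrational α) (k : ℕ) : D α k * D α (k + 1) < 0 := by
  have h1 := D_mul hα k
  have h2 := D_mul hα (k + 1)
  have h3 := E_pos hα k
  have h4 := E_pos hα (k + 1)
  have h5 : (D α k * D α (k + 1)) * (E α k * E α (k + 1)) = -1 := by
    rw [show (D α k * D α (k + 1)) * (E α k * E α (k + 1))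
        = (D α k * E α k) * (D α (k + 1) * E α (k + 1)) by ring, h1, h2, ← pow_add]
    exact Odd.neg_one_pow ⟨k, by ring⟩
  nlinarith [mul_pos h3 h4]

end CFAux

namespace CFAux
variable {α : ℝ}

lemma abs_add_of_mul_nonneg {a b : ℝ} (h : 0 ≤ a * b) : |a + b| = |a| + |b| := by
  rcases le_total 0 a with ha | ha <;> rcases le_total 0 b with hb | hb
  · rw [abs_of_nonneg ha, abs_of_nonneg hb, abs_of_nonneg (by linarith)]
  · have hab : a * b ≤ 0 := mul_nonpos_of_nonneg_of_nonpos ha hb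
    rcases mul_eq_zero.1 (le_antisymm hab h) with h0 | h0 <;> simp [h0]
  · have hab : a * b ≤ 0 := mul_nonpos_of_nonpos_of_nonneg ha hb
    rcases mul_eq_zero.1 (le_antisymm hab h) with h0 | h0 <;> simp [h0]
  · rw [abs_of_nonpos ha, abs_of_nonpos hb, abs_of_nonpos (by linarith)]; ring

lemma BA_abstract (αr : ℝ) (qk qk1 pk pk1 n p : ℤ)
    (hqk : 0 < qk) (hqk1 : 0 < qk1)
    (hdet : pk1 * qk - pk * qk1 = 1 ∨ pk1 * qk - pk * qk1 = -1)
    (hsign : ((qk : ℝ) * αr - pk) * ((qk1 : ℝ) * αr - pk1) < 0)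
    (hn : 0 < n) (hlt : n < qk1) :
    |(qk : ℝ) * αr - pk| ≤ |(n : ℝ) * αr - p| := by
  obtain ⟨x, y, hx, hy⟩ : ∃ x y : ℤ, x * qk + y * qk1 = n ∧ x * pk + y * pk1 = p := by
    rcases hdet with h | h
    · exact ⟨n * pk1 - p * qk1, p * qk - n * pk, by linear_combination n * h,
        by linear_combination p * h⟩
    · exact ⟨-(n * pk1 - p * qk1), -(p * qk - n * pk), by linear_combination (-n) * h,
        by linear_combination (-p) * h⟩
  have hrep : (n : ℝ) * αr - p =
      (x : ℝ) * ((qk : ℝ) * αr - pk) + (y : ℝ) * ((qk1 : ℝ) * αr - pk1) := by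
    have h1 : ((x * qk + y * qk1 : ℤ) : ℝ) = (n : ℝ) := by exact_mod_cast hx
    have h2 : ((x * pk + y * pk1 : ℤ) : ℝ) = (p : ℝ) := by exact_mod_cast hy
    push_cast at h1 h2
    linear_combination h2 - αr * h1
  rcases eq_or_ne y 0 with hy0 | hy0
  · have hxq : x * qk = n := by rw [hy0] at hx; simpa using hx
    have hxpos : 0 < x := by nlinarith
    have hx1 : (1 : ℝ) ≤ |(x : ℝ)| := by
      have : (1 : ℤ) ≤ |x| := Int.one_le_abs (by omega)
      exact_mod_cast this
    have hyr : (y : ℝ) = 0 := by exact_mod_cast congrArg (fun z : ℤ => (z : ℝ)) hy0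
    rw [hrep, hyr, zero_mul, add_zero, abs_mul]
    nlinarith [abs_nonneg ((qk : ℝ) * αr - pk)]
  · rcases eq_or_ne x 0 with hx0 | hx0
    · exfalso
      rw [hx0] at hx
      simp only [zero_mul, zero_add] at hx
      rcases lt_trichotomy y 0 with h | h | h
      · nlinarith
      · exact hy0 h
      · nlinarith
    · have hxy : x * y < 0 := by
        rcases lt_trichotomy (x * y) 0 with h | h | h
        · exact h
        · exact absurd (mul_eq_zero.1 h) (by push_neg; exact ⟨hx0, hy0⟩)
        · exfalso
          rcases lt_trichotomy x 0 with hxs | hxs | hxs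
          · have hys : y < 0 := by nlinarith
            nlinarith
          · exact hx0 hxs
          · have hys : 0 < y := by nlinarith
            nlinarith
      have hxyr : (x : ℝ) * (y : ℝ) < 0 := by exact_mod_cast hxy
      have hprod : 0 ≤ ((x : ℝ) * ((qk : ℝ) * αr - pk)) *
          ((y : ℝ) * ((qk1 : ℝ) * αr - pk1)) := by
        nlinarith [mul_pos_of_neg_of_neg hxyr hsign]
      have hx1 : (1 : ℝ) ≤ |(x : ℝ)| := by
        have : (1 : ℤ) ≤ |x| := Int.one_le_abs hx0
        exact_mod_cast this
      rw [hrep, abs_add_of_mul_nonneg hprod, abs_mul, abs_mul]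
      nlinarith [abs_nonneg ((qk : ℝ) * αr - pk), abs_nonneg ((qk1 : ℝ) * αr - pk1),
        abs_nonneg ((y : ℝ))]

lemma best_approx (hα : Irrational α) (k : ℕ) (n p : ℤ) (hn : 0 < n)
    (hlt : (n : ℝ) < ((qpair α (k + 1)).2 : ℝ)) :
    |D α k| ≤ |(n : ℝ) * α - (p : ℝ)| := by
  have hdet : (pp α (k + 1)).2 * ((qpair α k).2 : ℤ) -
      (pp α k).2 * ((qpair α (k + 1)).2 : ℤ) = (-1) ^ (k + 2) := by
    have h := det α (k + 1)
    have hq1 : ((qpair α (k + 1)).1 : ℤ) = ((qpair α k).2 : ℤ) := rfl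
    have hp1 : (pp α (k + 1)).1 = (pp α k).2 := rfl
    rwa [hq1, hp1] at h
  have hdet' : (pp α (k + 1)).2 * ((qpair α k).2 : ℤ) -
      (pp α k).2 * ((qpair α (k + 1)).2 : ℤ) = 1 ∨
      (pp α (k + 1)).2 * ((qpair α k).2 : ℤ) -
      (pp α k).2 * ((qpair α (k + 1)).2 : ℤ) = -1 := by
    rcases Nat.even_or_odd (k + 2) with h | h
    · left; rw [hdet, h.neg_one_pow]
    · right; rw [hdet, h.neg_one_pow]
  have hq : (0 : ℤ) < ((qpair α k).2 : ℤ) := by exact_mod_cast q_pos hα k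
  have hq1 : (0 : ℤ) < ((qpair α (k + 1)).2 : ℤ) := by exact_mod_cast q_pos hα (k + 1)
  have hsign : ((((qpair α k).2 : ℤ) : ℝ) * α - ((pp α k).2 : ℝ)) *
      ((((qpair α (k + 1)).2 : ℤ) : ℝ) * α - ((pp α (k + 1)).2 : ℝ)) < 0 := by
    have := D_sign hα k
    unfold D at this
    push_cast
    convert this
  have hltZ : n < ((qpair α (k + 1)).2 : ℤ) := by exact_mod_cast hlt
  have := BA_abstract α ((qpair α k).2 : ℤ) ((qpair α (k + 1)).2 : ℤ)
    (pp α k).2 (pp α (k + 1)).2 n p hq hq1 hdet' hsign hn hltZ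
  unfold D
  push_cast at this ⊢
  exact this

lemma nint_le (t : ℝ) (m : ℤ) : nint t ≤ |t - m| := round_le t m

lemma nint_nonneg (t : ℝ) : 0 ≤ nint t := abs_nonneg _

lemma nint_neg (t : ℝ) : nint (-t) = nint t := by
  apply le_antisymm
  · have h := nint_le (-t) (-(round t))
    calc nint (-t) ≤ |(-t) - ((-(round t) : ℤ) : ℝ)| := h
      _ = |t - round t| := by push_cast; rw [← abs_neg]; ring_nf
      _ = nint t := rfl
  · have h := nint_le t (-(round (-t)))
    calc nint t ≤ |t - ((-(round (-t)) : ℤ) : ℝ)| := h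
      _ = |(-t) - round (-t)| := by push_cast; rw [← abs_neg]; ring_nf
      _ = nint (-t) := rfl

lemma nint_add_int (t : ℝ) (m : ℤ) : nint (t + m) = nint t := by
  unfold nint
  rw [round_add_intCast]
  push_cast
  ring_nf

lemma nint_int_mul (m : ℤ) (t : ℝ) : nint ((m : ℝ) * t) ≤ |(m : ℝ)| * nint t := by
  calc nint ((m : ℝ) * t) ≤ |(m : ℝ) * t - ((m * round t : ℤ) : ℝ)| := nint_le _ _
    _ = |(m : ℝ)| * |t - round t| := by push_cast; rw [← abs_mul]; ring_nf
    _ = |(m : ℝ)| * nint t := rfl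

end CFAux

namespace CFAux

lemma D_eq (α : ℝ) (k : ℕ) :
    D α k = (qden α k : ℝ) * α - ((pp α k).2 : ℝ) := rfl

lemma qden_real_pos {α : ℝ} (hα : Irrational α) (k : ℕ) : (0 : ℝ) < (qden α k : ℝ) := by
  exact_mod_cast Nat.lt_of_lt_of_le Nat.zero_lt_one (q_pos hα k)

end CFAux

theorem rationally_independent_of_approximation_condition (α β : ℝ)
    (hα : Irrational α) (hβ : Irrational β)
    (h : ∀ n₁ n₂ : ℤ, n₁ ≠ 0 → n₂ ≠ 0 →
      ∃ k : ℕ, ((|n₁| : ℤ) : ℝ) < (qden α (k + 1) : ℝ) / (qden β k : ℝ) ∧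
        ((|n₂| : ℤ) : ℝ) < (qden β (k + 1) : ℝ) * nint ((qden α k : ℝ) * α)) :
    ∀ n₀ n₁ n₂ : ℤ, (n₀ : ℝ) + n₁ * α + n₂ * β = 0 → n₀ = 0 ∧ n₁ = 0 ∧ n₂ = 0 := by
  intro n₀ n₁ n₂ heq
  by_cases h1 : n₁ = 0
  · by_cases h2 : n₂ = 0
    · subst h1; subst h2
      refine ⟨?_, rfl, rfl⟩
      have : (n₀ : ℝ) = 0 := by push_cast at heq; linarith
      exact_mod_cast this
    · exfalso
      apply hβ
      refine ⟨(-n₀ : ℚ) / (n₂ : ℚ), ?_⟩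
      have hn2 : (n₂ : ℝ) ≠ 0 := by exact_mod_cast h2
      subst h1
      push_cast
      push_cast at heq
      field_simp
      linear_combination -heq
  · by_cases h2 : n₂ = 0
    · exfalso
      apply hα
      refine ⟨(-n₀ : ℚ) / (n₁ : ℚ), ?_⟩
      have hn1 : (n₁ : ℝ) ≠ 0 := by exact_mod_cast h1
      subst h2
      push_cast
      push_cast at heq
      field_simp
      linear_combination -heq
    · exfalso
      obtain ⟨k, hk1, hk2⟩ := h n₁ n₂ h1 h2
      have hQpos : (0 : ℝ) < (qden β k : ℝ) := CFAux.qden_real_pos hβ k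
      have hQ1pos : (0 : ℝ) < (qden β (k + 1) : ℝ) := CFAux.qden_real_pos hβ (k + 1)
      rw [div_eq_mul_one_div, ← div_eq_mul_one_div] at hk1
      rw [lt_div_iff₀ hQpos] at hk1
      set n : ℤ := |n₁| * ((qden β k : ℕ) : ℤ) with hndef
      have hnpos : 0 < n := by
        apply mul_pos (abs_pos.2 h1)
        exact_mod_cast hQpos
      have hnlt : (n : ℝ) < ((qpair α (k + 1)).2 : ℝ) := by
        have : ((qpair α (k + 1)).2 : ℝ) = (qden α (k + 1) : ℝ) := rfl
        rw [this, hndef]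
        push_cast
        push_cast at hk1
        linarith
      -- lower bound chain
      have hlow : nint ((qden α k : ℝ) * α) ≤ nint ((n : ℝ) * α) := by
        have hb := CFAux.best_approx hα k n (round ((n : ℝ) * α)) hnpos hnlt
        have hD := CFAux.nint_le ((qden α k : ℝ) * α) ((CFAux.pp α k).2)
        rw [← CFAux.D_eq] at hD
        exact le_trans hD hb
      -- switch to `n₁ * Q`
      have hm : nint ((n : ℝ) * α) = nint (((n₁ * ((qden β k : ℕ) : ℤ) : ℤ) : ℝ) * α) := by
        rcases abs_cases n₁ with ⟨ha, _⟩ | ⟨ha, _⟩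
        · rw [hndef, ha]
        · rw [hndef, ha]
          have : ((-n₁ * ((qden β k : ℕ) : ℤ) : ℤ) : ℝ) * α
              = -(((n₁ * ((qden β k : ℕ) : ℤ) : ℤ) : ℝ) * α) := by push_cast; ring
          rw [this, CFAux.nint_neg]
      -- upper bound chain
      have heq2 : ((n₁ * ((qden β k : ℕ) : ℤ) : ℤ) : ℝ) * α =
          ((-(n₂ * ((qden β k : ℕ) : ℤ)) : ℤ) : ℝ) * β +
          ((-(n₀ * ((qden β k : ℕ) : ℤ)) : ℤ) : ℝ) := by
        push_cast
        linear_combination (qden β k : ℝ) * heq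
      have hupper : nint (((n₁ * ((qden β k : ℕ) : ℤ) : ℤ) : ℝ) * α) ≤
          ((|n₂| : ℤ) : ℝ) * nint ((qden β k : ℝ) * β) := by
        rw [heq2, CFAux.nint_add_int]
        have hre : ((-(n₂ * ((qden β k : ℕ) : ℤ)) : ℤ) : ℝ) * β
            = ((-n₂ : ℤ) : ℝ) * ((qden β k : ℝ) * β) := by push_cast; ring
        rw [hre]
        have hmul := CFAux.nint_int_mul (-n₂) ((qden β k : ℝ) * β)
        have habs : |((-n₂ : ℤ) : ℝ)| = ((|n₂| : ℤ) : ℝ) := by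
          push_cast
          rw [abs_neg]
        rwa [habs] at hmul
      have hβbound : nint ((qden β k : ℝ) * β) < 1 / (qden β (k + 1) : ℝ) := by
        have hb1 := CFAux.nint_le ((qden β k : ℝ) * β) ((CFAux.pp β k).2)
        rw [← CFAux.D_eq] at hb1
        have hb2 := CFAux.D_abs_lt hβ k
        have : ((qpair β (k + 1)).2 : ℝ) = (qden β (k + 1) : ℝ) := rfl
        rw [this] at hb2
        exact lt_of_le_of_lt hb1 hb2
      have habs2 : (1 : ℝ) ≤ ((|n₂| : ℤ) : ℝ) := by exact_mod_cast Int.one_le_abs h2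
      have final1 : ((|n₂| : ℤ) : ℝ) * nint ((qden β k : ℝ) * β) <
          ((|n₂| : ℤ) : ℝ) / (qden β (k + 1) : ℝ) := by
        rw [div_eq_mul_one_div]
        exact mul_lt_mul_of_pos_left hβbound (by linarith)
      have final2 : ((|n₂| : ℤ) : ℝ) / (qden β (k + 1) : ℝ) < nint ((qden α k : ℝ) * α) := by
        rw [div_lt_iff₀ hQ1pos]
        linarith [hk2]
      rw [hm] at hlow
      linarith
end

section
/- Discrete three-gap structure of return times: let q' > N ≥ 1 be integers and r an integer coprime to q' with 0 < r < q'. Define for 0 ≤ m < N the return time τ(m) = min{ℓ ≥ 1 : 0 ≤ |m + ℓr|_{q'} < N}. Then there exist positive integers τ₁, τ₂ and integers 0 ≤ N₁ ≤ N₂ ≤ N such that τ(m) = τ₁ for 0 ≤ m < N₁, τ(m) = τ₁+τ₂ for N₁ ≤ m < N₂, and τ(m) = τ₂ for N₂ ≤ m < N. -/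
/-!
Write `a = ta r mod q` for the first time `ta ≥ 1` at which the translation by `r` moves points
forward by less than `N`, and `q - s = tb r mod q` for the first time `tb ≥ 1` at which it moves
them backward by `s < N`. For `0 < ℓ < ta + tb` every jump `ℓ r mod q` lies in `[a, q - s]`,
because subtracting `ta` or `tb` from a time that did better would give an earlier forward or
backward time; the same subtraction shows `N ≤ a + s`. Hence `m ∈ [0, N)` first returns at
time `ta` when `m + a < N`, at time `tb` when `m ≥ s`, and at time `ta + tb` otherwise.
-/

namespace Nat

theorem add_mul_mod_eq_or (ℓ k r q : ℕ) :
    (ℓ + k) * r % q = ℓ * r % q + k * r % q ∨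
      (ℓ + k) * r % q + q = ℓ * r % q + k * r % q := by
  rw [Nat.add_mul, Nat.add_mod_eq_ite]
  split_ifs <;> omega

theorem exists_pos_mul_mod_eq {q r x : ℕ} (hcop : Nat.Coprime r q) (hx : 0 < x) (hxq : x < q) :
    ∃ ℓ, 1 ≤ ℓ ∧ ℓ * r % q = x := by
  obtain ⟨ℓ, -, hℓ⟩ := Nat.exists_mul_mod_eq_of_coprime x hcop (by omega)
  rw [Nat.mod_eq_of_lt hxq, mul_comm] at hℓ
  refine ⟨ℓ, Nat.pos_of_ne_zero ?_, hℓ⟩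
  rintro rfl
  rw [zero_mul, Nat.zero_mod] at hℓ
  omega

end Nat

namespace DiscreteThreeGap

def forwardTimes (q N r : ℕ) : Set ℕ := {ℓ | 1 ≤ ℓ ∧ ℓ * r % q < N}

/-- Times `ℓ ≥ 1` with `ℓ r ≡ -s (mod q)` for some `0 < s < N`. -/
def backwardTimes (q N r : ℕ) : Set ℕ := {ℓ | 1 ≤ ℓ ∧ q - N < ℓ * r % q}

def returnTimes (q N r m : ℕ) : Set ℕ := {ℓ | 1 ≤ ℓ ∧ (m + ℓ * r) % q < N}

variable {q N r ta tb ℓ m : ℕ}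

theorem forwardTimes_nonempty (hcop : Nat.Coprime r q) (hN : 2 ≤ N) (hNq : N < q) :
    (forwardTimes q N r).Nonempty := by
  obtain ⟨ℓ, hℓ, hℓr⟩ := Nat.exists_pos_mul_mod_eq hcop one_pos (by omega : 1 < q)
  exact ⟨ℓ, hℓ, by omega⟩

theorem backwardTimes_nonempty (hcop : Nat.Coprime r q) (hN : 2 ≤ N) (hNq : N < q) :
    (backwardTimes q N r).Nonempty := by
  obtain ⟨ℓ, hℓ, hℓr⟩ := Nat.exists_pos_mul_mod_eq hcop (by omega : 0 < q - 1) (by omega)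
  exact ⟨ℓ, hℓ, by omega⟩

theorem le_mul_mod_of_lt_forward (hta : IsLeast (forwardTimes q N r) ta) (hℓ : 1 ≤ ℓ)
    (hℓta : ℓ < ta) : N ≤ ℓ * r % q := by
  by_contra! h
  exact absurd (hta.2 ⟨hℓ, h⟩) (by omega)

theorem mul_mod_le_of_lt_backward (htb : IsLeast (backwardTimes q N r) tb) (hℓtb : ℓ < tb) :
    ℓ * r % q ≤ q - N := by
  rcases Nat.eq_zero_or_pos ℓ with rfl | hℓ
  · simp
  by_contra! h
  exact absurd (htb.2 ⟨hℓ, h⟩) (by omega)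

theorem le_forward_add_backward (hNq : N ≤ q) (hta : IsLeast (forwardTimes q N r) ta)
    (htb : IsLeast (backwardTimes q N r) tb) : N ≤ ta * r % q + (q - tb * r % q) := by
  obtain ⟨hta1, ha⟩ := hta.1
  obtain ⟨htb1, hb⟩ := htb.1
  rcases lt_trichotomy ta tb with h | rfl | h
  · have hk := mul_mod_le_of_lt_backward htb (by omega : tb - ta < tb)
    have := Nat.add_mul_mod_eq_or (tb - ta) ta r q
    rw [Nat.sub_add_cancel h.le] at this
    omega
  · omega
  · have hk := le_mul_mod_of_lt_forward hta (by omega) (by omega : ta - tb < ta)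
    have := Nat.add_mul_mod_eq_or (ta - tb) tb r q
    rw [Nat.sub_add_cancel h.le] at this
    omega

theorem mul_mod_mem_Icc_of_lt_add (hNq : N ≤ q) (hta : IsLeast (forwardTimes q N r) ta)
    (htb : IsLeast (backwardTimes q N r) tb) (hℓ : 1 ≤ ℓ) (hℓt : ℓ < ta + tb) :
    ℓ * r % q ∈ Set.Icc (ta * r % q) (tb * r % q) := by
  have ha := hta.1.2
  have hb := htb.1.2
  have hq : 0 < q := by omega
  have hD := Nat.mod_lt (ℓ * r) hq
  have forward_le (h : ℓ * r % q < N) : ta * r % q ≤ ℓ * r % q := by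
    have hle : ta ≤ ℓ := hta.2 ⟨hℓ, h⟩
    have hk := mul_mod_le_of_lt_backward htb (by omega : ℓ - ta < tb)
    have := Nat.add_mul_mod_eq_or (ℓ - ta) ta r q
    rw [Nat.sub_add_cancel hle] at this
    omega
  have le_backward (h : q - N < ℓ * r % q) : ℓ * r % q ≤ tb * r % q := by
    have hle : tb ≤ ℓ := htb.2 ⟨hℓ, h⟩
    rcases hle.eq_or_lt with rfl | hlt
    · rfl
    have hk := le_mul_mod_of_lt_forward hta (by omega) (by omega : ℓ - tb < ta)
    have hk' := Nat.mod_lt ((ℓ - tb) * r) hq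
    have := Nat.add_mul_mod_eq_or (ℓ - tb) tb r q
    rw [Nat.sub_add_cancel hle] at this
    omega
  constructor
  · by_cases h : ℓ * r % q < N
    · exact forward_le h
    · omega
  · by_cases h : q - N < ℓ * r % q
    · exact le_backward h
    · omega

theorem mem_returnTimes_iff (hmN : m < N) (hNq : N ≤ q) :
    ℓ ∈ returnTimes q N r m ↔ 1 ≤ ℓ ∧ (ℓ * r % q + m < N ∨ q ≤ ℓ * r % q + m) := by
  have hD := Nat.mod_lt (ℓ * r) (by omega : 0 < q)
  simp only [returnTimes, Set.mem_ofPred_eq, Nat.add_mod_eq_ite,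
    Nat.mod_eq_of_lt (by omega : m < q)]
  split_ifs <;> omega

theorem isLeast_returnTimes_of_add_lt (hNq : N ≤ q) (hta : IsLeast (forwardTimes q N r) ta)
    (htb : IsLeast (backwardTimes q N r) tb) (hm : m + ta * r % q < N) :
    IsLeast (returnTimes q N r m) ta := by
  have hL := le_forward_add_backward hNq hta htb
  refine ⟨(mem_returnTimes_iff (by omega) hNq).2 ⟨hta.1.1, by omega⟩, fun ℓ hℓ ↦ ?_⟩
  obtain ⟨hℓ1, hret⟩ := (mem_returnTimes_iff (by omega) hNq).1 hℓ
  by_contra! hlt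
  have hNℓ := le_mul_mod_of_lt_forward hta hℓ1 hlt
  have hIcc := mul_mod_mem_Icc_of_lt_add hNq hta htb hℓ1 (by have := htb.1.1; omega)
  have := hIcc.2
  omega

theorem isLeast_returnTimes_of_le_add (hNq : N ≤ q) (hta : IsLeast (forwardTimes q N r) ta)
    (htb : IsLeast (backwardTimes q N r) tb) (hmN : m < N) (hm : q ≤ m + tb * r % q) :
    IsLeast (returnTimes q N r m) tb := by
  have hL := le_forward_add_backward hNq hta htb
  refine ⟨(mem_returnTimes_iff hmN hNq).2 ⟨htb.1.1, by omega⟩, fun ℓ hℓ ↦ ?_⟩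
  obtain ⟨hℓ1, hret⟩ := (mem_returnTimes_iff hmN hNq).1 hℓ
  by_contra! hlt
  have hqN := mul_mod_le_of_lt_backward htb hlt
  have hIcc := mul_mod_mem_Icc_of_lt_add hNq hta htb hℓ1 (by have := hta.1.1; omega)
  have := hIcc.1
  omega

theorem isLeast_returnTimes_add (hNq : N ≤ q) (hta : IsLeast (forwardTimes q N r) ta)
    (htb : IsLeast (backwardTimes q N r) tb) (hmN : m < N) (hma : N ≤ m + ta * r % q)
    (hmb : m + tb * r % q < q) : IsLeast (returnTimes q N r m) (ta + tb) := by
  have ha := hta.1.2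
  have hb := htb.1.2
  refine ⟨(mem_returnTimes_iff hmN hNq).2 ⟨by have := hta.1.1; omega, ?_⟩, fun ℓ hℓ ↦ ?_⟩
  · have := Nat.add_mul_mod_eq_or ta tb r q
    omega
  obtain ⟨hℓ1, hret⟩ := (mem_returnTimes_iff hmN hNq).1 hℓ
  by_contra! hlt
  have hIcc := mul_mod_mem_Icc_of_lt_add hNq hta htb hℓ1 hlt
  have := hIcc.1
  have := hIcc.2
  omega

end DiscreteThreeGap

open DiscreteThreeGap in
theorem discrete_three_gap_return_times_general (q' N r : ℕ)
    (hN : 1 ≤ N) (hNq : N < q')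
    (hcop : Nat.Coprime r q') (τ : ℕ → ℕ)
    (hτ : ∀ m, m < N → 1 ≤ τ m ∧ (m + τ m * r) % q' < N ∧
      ∀ ℓ, 1 ≤ ℓ → (m + ℓ * r) % q' < N → τ m ≤ ℓ) :
    ∃ τ₁ τ₂ N₁ N₂ : ℕ, 0 < τ₁ ∧ 0 < τ₂ ∧ N₁ ≤ N₂ ∧ N₂ ≤ N ∧
      ∀ m, m < N → τ m = if m < N₁ then τ₁ else if m < N₂ then τ₁ + τ₂ else τ₂ := by
  obtain rfl | hN2 : N = 1 ∨ 2 ≤ N := by omega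
  · obtain ⟨hpos, -, -⟩ := hτ 0 one_pos
    refine ⟨τ 0, τ 0, 1, 1, hpos, hpos, le_rfl, le_rfl, fun m hm ↦ ?_⟩
    simp [Nat.lt_one_iff.mp hm]
  have hta := isLeast_csInf (forwardTimes_nonempty hcop hN2 hNq)
  have htb := isLeast_csInf (backwardTimes_nonempty hcop hN2 hNq)
  set ta := sInf (forwardTimes q' N r)
  set tb := sInf (backwardTimes q' N r)
  have hL := le_forward_add_backward hNq.le hta htb
  have hb := htb.1.2
  refine ⟨ta, tb, N - ta * r % q', q' - tb * r % q', hta.1.1, htb.1.1, by omega, by omega,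
    fun m hm ↦ ?_⟩
  obtain ⟨hτ1, hτret, hτmin⟩ := hτ m hm
  have hτm : IsLeast (returnTimes q' N r m) (τ m) := ⟨⟨hτ1, hτret⟩, fun ℓ hℓ ↦ hτmin ℓ hℓ.1 hℓ.2⟩
  split_ifs with h₁ h₂
  · exact hτm.unique (isLeast_returnTimes_of_add_lt hNq.le hta htb (by omega))
  · exact hτm.unique (isLeast_returnTimes_add hNq.le hta htb hm (by omega) (by omega))
  · exact hτm.unique (isLeast_returnTimes_of_le_add hNq.le hta htb hm (by omega))

theorem discrete_three_gap_return_times (q' N r : ℕ)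
    (hN : 1 ≤ N) (hNq : N < q') (hr0 : 0 < r) (hr1 : r < q')
    (hcop : Nat.Coprime r q') (τ : ℕ → ℕ)
    (hτ : ∀ m, m < N → 1 ≤ τ m ∧ (m + τ m * r) % q' < N ∧
      ∀ ℓ, 1 ≤ ℓ → (m + ℓ * r) % q' < N → τ m ≤ ℓ) :
    ∃ τ₁ τ₂ N₁ N₂ : ℕ, 0 < τ₁ ∧ 0 < τ₂ ∧ N₁ ≤ N₂ ∧ N₂ ≤ N ∧
      ∀ m, m < N → τ m = if m < N₁ then τ₁ else if m < N₂ then τ₁ + τ₂ else τ₂ :=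
  discrete_three_gap_return_times_general q' N r hN hNq hcop τ hτ
end

section
/- In the setting of the discrete three-gap lemma above, additionally there exist nonnegative integers d₁, d₂ such that as sets of integers [0,N₁) + τ₁r = [N−N₁, N) + d₁q', [N₂, N) + τ₂r = [0, N−N₂) + d₂q', and [N₁,N₂) + (τ₁+τ₂)r = [N−N₂, N−N₁) + (d₁+d₂)q'. -/
/-!
The first-return map `T m = (m + τ m * r) % q'` of the rotation by `r` to the window `[0, N)` is
injective, and on a block where `τ` is constant it is a translation. Where `τ` jumps up from `m`
to `m + 1`, the point `m` must return to `N - 1` (otherwise `m + 1` would return earlier); where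
it jumps down, `m + 1` returns to `0`. This pins the images of the left and right blocks to
`[N - N₁, N)` and `[0, N - N₂)`, and the middle shift is the sum of the two. When a block is
empty, the other two form a two-interval exchange, which is the rotation by the length of the
right block: `T 0 = 0` is impossible for `N ≥ 2`, as some `ℓ < q'` has `ℓ * r ≡ 1`.
-/

def IsFirstReturnTime (q N r : ℕ) (τ : ℕ → ℕ) : Prop :=
  ∀ m < N, 1 ≤ τ m ∧ (m + τ m * r) % q < N ∧ ∀ ℓ, 1 ≤ ℓ → (m + ℓ * r) % q < N → τ m ≤ ℓ

def returnMap (q r : ℕ) (τ : ℕ → ℕ) (m : ℕ) : ℕ := (m + τ m * r) % q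

namespace IsFirstReturnTime

variable {q N r : ℕ} {τ : ℕ → ℕ}

theorem returnMap_lt (hτ : IsFirstReturnTime q N r τ) {m : ℕ} (hm : m < N) :
    returnMap q r τ m < N :=
  (hτ m hm).2.1

theorem injOn_returnMap (hτ : IsFirstReturnTime q N r τ) (hNq : N ≤ q) :
    Set.InjOn (returnMap q r τ) (Set.Iio N) := by
  intro m hm m' hm' h
  wlog hle : τ m ≤ τ m' generalizing m m'
  · exact (this hm' hm h.symm (le_of_not_ge hle)).symm
  have hm : m < N := hm
  have hm' : m' < N := hm'
  obtain ⟨k, hk⟩ := Nat.exists_eq_add_of_le hle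
  -- `m'` reaches the residue of `m` after `k` steps, so `k = 0` by minimality of `τ m'`
  have hmod : m' + k * r ≡ m [MOD q] := by
    refine Nat.ModEq.add_right_cancel' (τ m * r) ?_
    have : m' + k * r + τ m * r = m' + τ m' * r := by rw [hk]; ring
    rw [this]
    exact h.symm
  rcases Nat.eq_zero_or_pos k with rfl | hk0
  · simpa [Nat.ModEq, Nat.mod_eq_of_lt (hm.trans_le hNq), Nat.mod_eq_of_lt (hm'.trans_le hNq)]
      using hmod.symm
  · have := (hτ m' hm').2.2 k hk0 (by rw [hmod, Nat.mod_eq_of_lt (hm.trans_le hNq)]; exact hm)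
    have := (hτ m hm).1
    omega

theorem le_of_returnMap_add_one_lt (hτ : IsFirstReturnTime q N r τ) (hNq : N ≤ q) {m : ℕ}
    (hm : m + 1 < N) (h : returnMap q r τ m + 1 < N) : τ (m + 1) ≤ τ m := by
  refine (hτ (m + 1) hm).2.2 (τ m) (hτ m (by omega)).1 ?_
  have : (m + 1 + τ m * r) % q = (returnMap q r τ m + 1) % q := by
    rw [returnMap, Nat.mod_add_mod, add_right_comm]
  rwa [this, Nat.mod_eq_of_lt (h.trans_le hNq)]

theorem le_of_returnMap_pos (hτ : IsFirstReturnTime q N r τ) (hNq : N ≤ q) {m : ℕ}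
    (hm : m + 1 < N) (h : 0 < returnMap q r τ (m + 1)) : τ m ≤ τ (m + 1) := by
  refine (hτ m (by omega)).2.2 (τ (m + 1)) (hτ (m + 1) hm).1 ?_
  have hlt := hτ.returnMap_lt hm
  have : m + τ (m + 1) * r ≡ returnMap q r τ (m + 1) - 1 [MOD q] := by
    refine Nat.ModEq.add_right_cancel' 1 ?_
    rw [Nat.sub_add_cancel h, add_right_comm]
    exact (Nat.mod_modEq _ q).symm
  rw [this, Nat.mod_eq_of_lt (by omega)]
  omega

theorem returnMap_succ (hτ : IsFirstReturnTime q N r τ) (hNq : N < q) {m : ℕ}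
    (hm : m + 1 < N) (h : τ (m + 1) = τ m) :
    returnMap q r τ (m + 1) = returnMap q r τ m + 1 := by
  have hlt := hτ.returnMap_lt (show m < N by omega)
  rw [returnMap, h, add_right_comm, ← Nat.mod_add_mod, ← returnMap, Nat.mod_eq_of_lt (by omega)]

theorem returnMap_add (hτ : IsFirstReturnTime q N r τ) (hNq : N < q) {u k : ℕ}
    (hu : u + k < N) (h : ∀ j ≤ k, τ (u + j) = τ u) :
    returnMap q r τ (u + k) = returnMap q r τ u + k := by
  induction k with
  | zero => rfl
  | succ k ih =>
    have hstep : τ (u + k + 1) = τ (u + k) := by rw [add_assoc, h _ le_rfl, h k (by omega)]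
    rw [← add_assoc, hτ.returnMap_succ hNq (m := u + k) (by omega) hstep,
      ih (by omega) fun j hj => h j (by omega), add_assoc]

theorem returnMap_zero_pos (hτ : IsFirstReturnTime q N r τ) (hNq : N < q) (hcop : r.Coprime q)
    (hN : 2 ≤ N) : 0 < returnMap q r τ 0 := by
  obtain ⟨ℓ, hℓq, hℓ⟩ := Nat.exists_mul_mod_eq_one_of_coprime hcop (by omega)
  have hℓ0 : 1 ≤ ℓ := Nat.pos_of_ne_zero (by rintro rfl; simp at hℓ)
  have hτℓ : τ 0 ≤ ℓ := (hτ 0 (by omega)).2.2 ℓ hℓ0 (by rw [zero_add, mul_comm, hℓ]; omega)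
  by_contra h0
  have hdvd : q ∣ τ 0 * r := Nat.dvd_of_mod_eq_zero (by simpa [returnMap] using h0)
  have := Nat.le_of_dvd (hτ 0 (by omega)).1 (hcop.symm.dvd_of_dvd_mul_right hdvd)
  omega

/-- The images of the two blocks are disjoint translates tiling `[0, N)`, so the map is either the
identity, excluded by `returnMap_zero_pos`, or the rotation by `N - k`. -/
theorem returnMap_two_blocks (hτ : IsFirstReturnTime q N r τ) (hNq : N < q)
    (hcop : r.Coprime q) {k : ℕ} (hkN : k ≤ N) (hA : ∀ m < k, τ m = τ 0)
    (hC : ∀ m, k ≤ m → m < N → τ m = τ k) :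
    (0 < k → returnMap q r τ 0 = N - k) ∧ (k < N → returnMap q r τ k = 0) := by
  have tA : ∀ j < k, returnMap q r τ j = returnMap q r τ 0 + j := fun j hj => by
    simpa using hτ.returnMap_add hNq (u := 0) (k := j) (by omega)
      fun i hi => by simpa using hA i (by omega)
  have tC : ∀ j, k + j < N → returnMap q r τ (k + j) = returnMap q r τ k + j := fun j hj =>
    hτ.returnMap_add hNq hj fun i hi => hC _ (by omega) (by omega)
  have hA_end := tA (k - 1)
  have hC_end := tC (N - 1 - k)
  have hlt₁ := hτ.returnMap_lt (m := k - 1)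
  have hlt₂ := hτ.returnMap_lt (m := k + (N - 1 - k))
  rcases Nat.eq_zero_or_pos k with rfl | hk
  · exact ⟨by omega, fun _ => by simp at hC_end hlt₂; omega⟩
  rcases hkN.eq_or_lt with rfl | hkN
  · exact ⟨fun _ => by omega, by omega⟩
  have h0 := hτ.returnMap_zero_pos hNq hcop (by omega)
  have inj := hτ.injOn_returnMap hNq.le
  suffices returnMap q r τ 0 = N - k ∧ returnMap q r τ k = 0 from
    ⟨fun _ => this.1, fun _ => this.2⟩
  rcases lt_trichotomy (returnMap q r τ 0) (returnMap q r τ k) with hlt | heq | hgt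
  · have : returnMap q r τ 0 + k ≤ returnMap q r τ k := by
      by_contra! h
      have := inj (show returnMap q r τ k - returnMap q r τ 0 < N by omega)
        (show k < N from hkN) (by rw [tA _ (by omega)]; omega)
      omega
    omega
  · exact absurd (inj (show 0 < N by omega) hkN heq) (by omega)
  · have : returnMap q r τ k + (N - k) ≤ returnMap q r τ 0 := by
      by_contra! h
      have := inj (show k + (returnMap q r τ 0 - returnMap q r τ k) < N by omega)
        (show 0 < N by omega) (by rw [tC _ (by omega)]; omega)
      omega
    omega

end IsFirstReturnTime

def HasThreeGapStructure (N N₁ N₂ τ₁ τ₂ : ℕ) (τ : ℕ → ℕ) : Prop :=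
  ∀ m < N, τ m = if m < N₁ then τ₁ else if m < N₂ then τ₁ + τ₂ else τ₂

namespace HasThreeGapStructure

variable {q N r N₁ N₂ τ₁ τ₂ m : ℕ} {τ : ℕ → ℕ}

theorem eq_left (hs : HasThreeGapStructure N N₁ N₂ τ₁ τ₂ τ) (h1N : N₁ ≤ N) (hm : m < N₁) :
    τ m = τ₁ := by
  rw [hs m (by omega), if_pos hm]

theorem eq_middle (hs : HasThreeGapStructure N N₁ N₂ τ₁ τ₂ τ) (h2N : N₂ ≤ N) (hm₁ : N₁ ≤ m)
    (hm₂ : m < N₂) : τ m = τ₁ + τ₂ := by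
  rw [hs m (by omega), if_neg (by omega), if_pos hm₂]

theorem eq_right (hs : HasThreeGapStructure N N₁ N₂ τ₁ τ₂ τ) (h12 : N₁ ≤ N₂) (hm₂ : N₂ ≤ m)
    (hm : m < N) : τ m = τ₂ := by
  rw [hs m hm, if_neg (by omega), if_neg (by omega)]

theorem left_shift (hs : HasThreeGapStructure N N₁ N₂ τ₁ τ₂ τ) (hτ : IsFirstReturnTime q N r τ)
    (hNq : N < q) (hcop : r.Coprime q) (hτ₂ : 0 < τ₂) (h12 : N₁ ≤ N₂) (h2N : N₂ ≤ N)
    (hN₁ : 0 < N₁) : τ₁ * r % q = N - N₁ := by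
  have hT0 : returnMap q r τ 0 = τ₁ * r % q := by
    rw [returnMap, zero_add, hs.eq_left (by omega) hN₁]
  rw [← hT0]
  rcases h12.lt_or_eq with h12 | rfl
  · -- `τ` jumps up at `N₁`, so the last point of the left block returns to `N - 1`
    have hend := hτ.returnMap_add hNq (u := 0) (k := N₁ - 1) (by omega)
      fun j hj => by rw [hs.eq_left (by omega) (by omega), hs.eq_left (by omega) hN₁]
    have hlt := hτ.returnMap_lt (m := N₁ - 1) (by omega)
    have hjump : ¬ τ (N₁ - 1 + 1) ≤ τ (N₁ - 1) := by
      rw [Nat.sub_add_cancel hN₁, hs.eq_middle h2N le_rfl h12, hs.eq_left (by omega) (by omega)]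
      omega
    have := mt (hτ.le_of_returnMap_add_one_lt hNq.le (by omega)) hjump
    rw [zero_add] at hend
    omega
  · exact (hτ.returnMap_two_blocks hNq hcop h2N
      (fun m hm => by rw [hs.eq_left h2N hm, hs.eq_left h2N hN₁])
      (fun m hm hmN => by
        rw [hs.eq_right le_rfl hm hmN, hs.eq_right le_rfl le_rfl (by omega)])).1 hN₁

theorem right_shift (hs : HasThreeGapStructure N N₁ N₂ τ₁ τ₂ τ) (hτ : IsFirstReturnTime q N r τ)
    (hNq : N < q) (hcop : r.Coprime q) (hτ₁ : 0 < τ₁) (h12 : N₁ ≤ N₂) (h2N : N₂ ≤ N)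
    (hN₂ : N₂ < N) : (N₂ + τ₂ * r) % q = 0 := by
  have hT : returnMap q r τ N₂ = (N₂ + τ₂ * r) % q := by
    rw [returnMap, hs.eq_right h12 le_rfl hN₂]
  rw [← hT]
  rcases h12.lt_or_eq with h12 | rfl
  · -- `τ` jumps down at `N₂`, so the first point of the right block returns to `0`
    have hjump : ¬ τ (N₂ - 1) ≤ τ (N₂ - 1 + 1) := by
      rw [Nat.sub_add_cancel (by omega), hs.eq_right (by omega) le_rfl hN₂,
        hs.eq_middle h2N (by omega) (by omega)]
      omega
    have := mt (hτ.le_of_returnMap_pos hNq.le (by omega)) hjump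
    rw [Nat.sub_add_cancel (by omega)] at this
    omega
  · exact (hτ.returnMap_two_blocks hNq hcop h2N
      (fun m hm => by rw [hs.eq_left h2N hm, hs.eq_left h2N (show 0 < N₁ by omega)])
      (fun m hm hmN => by rw [hs.eq_right le_rfl hm hmN, hs.eq_right le_rfl le_rfl hN₂])).2 hN₂

theorem middle_shift (hs : HasThreeGapStructure N N₁ N₂ τ₁ τ₂ τ)
    (hτ : IsFirstReturnTime q N r τ) (hNq : N < q) (hcop : r.Coprime q) (hτ₁ : 0 < τ₁)
    (hτ₂ : 0 < τ₂) (h12 : N₁ < N₂) (h2N : N₂ ≤ N) :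
    (N₁ + (τ₁ + τ₂) * r) % q = N - N₂ := by
  rcases Nat.eq_zero_or_pos N₁ with rfl | hN₁
  · have := (hτ.returnMap_two_blocks hNq hcop h2N
      (fun m hm => by rw [hs.eq_middle h2N (Nat.zero_le m) hm, hs.eq_middle h2N le_rfl h12])
      (fun m hm hmN => by
        rw [hs.eq_right h12.le hm hmN, hs.eq_right h12.le le_rfl (by omega)])).1 h12
    rwa [returnMap, hs.eq_middle h2N le_rfl h12] at this
  rcases h2N.lt_or_eq with hN₂ | rfl
  · -- the middle shift is the sum of the other two
    have h₁ : τ₁ * r ≡ N - N₁ [MOD q] := by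
      rw [Nat.ModEq, hs.left_shift hτ hNq hcop hτ₂ h12.le h2N hN₁, Nat.mod_eq_of_lt (by omega)]
    have h₂ : N₂ + τ₂ * r ≡ 0 [MOD q] := hs.right_shift hτ hNq hcop hτ₁ h12.le h2N hN₂
    have : N₁ + (τ₁ + τ₂) * r + N₂ ≡ N - N₂ + N₂ [MOD q] :=
      calc N₁ + (τ₁ + τ₂) * r + N₂ = N₁ + τ₁ * r + (N₂ + τ₂ * r) := by ring
        _ ≡ N₁ + (N - N₁) + 0 [MOD q] := (h₁.add_left N₁).add h₂
        _ = N - N₂ + N₂ := by omega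
    rw [Nat.ModEq.add_right_cancel' N₂ this, Nat.mod_eq_of_lt (by omega)]
  · have := (hτ.returnMap_two_blocks hNq hcop h12.le
      (fun m hm => by rw [hs.eq_left h12.le hm, hs.eq_left h12.le hN₁])
      (fun m hm hmN => by rw [hs.eq_middle le_rfl hm hmN, hs.eq_middle le_rfl le_rfl h12])).2 h12
    rwa [returnMap, hs.eq_middle le_rfl le_rfl h12, ← Nat.sub_self N₂] at this

end HasThreeGapStructure

theorem Nat.image_add_const_Ico_eq {u v u' v' x y : ℕ} (hlen : v - u = v' - u')
    (h : u < v → u + x = u' + y) :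
    (fun m => m + x) '' Set.Ico u v = (fun m => m + y) '' Set.Ico u' v' := by
  rw [Set.image_add_const_Ico, Set.image_add_const_Ico]
  rcases lt_or_ge u v with huv | hvu
  · have h₁ := h huv
    have h₂ : v + x = v' + y := by omega
    rw [h₁, h₂]
  · rw [Set.Ico_eq_empty (by omega), Set.Ico_eq_empty (by omega)]

theorem exists_block_quotients {q N N₁ N₂ x y : ℕ} (hNq : N < q) (h12 : N₁ ≤ N₂) (h2N : N₂ ≤ N)
    (h₁ : 0 < N₁ → x % q = N - N₁) (h₂ : N₂ < N → (N₂ + y) % q = 0)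
    (h₃ : N₁ < N₂ → (N₁ + (x + y)) % q = N - N₂) :
    ∃ d₁ d₂, (0 < N₁ → x = N - N₁ + d₁ * q) ∧ (N₂ < N → N₂ + y = d₂ * q) ∧
      (N₁ < N₂ → N₁ + (x + y) = N - N₂ + (d₁ + d₂) * q) := by
  have e₁ := Nat.mod_add_div' x q
  have e₂ := Nat.mod_add_div' (N₂ + y) q
  have e₃ := Nat.mod_add_div' (N₁ + (x + y)) q
  set d₁ := x / q
  set d₂ := (N₂ + y) / q
  set e := (N₁ + (x + y)) / q
  rcases Nat.eq_zero_or_pos N₁ with rfl | hN₁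
  · rcases h2N.lt_or_eq with hN₂ | rfl
    · rcases Nat.eq_zero_or_pos N₂ with rfl | hN₂'
      · exact ⟨0, d₂, by omega, fun _ => by omega, by omega⟩
      -- the left block is empty, so `d₁` is read off the middle block
      have h₂ := h₂ hN₂
      have h₃ := h₃ hN₂'
      have hle : d₂ ≤ e := Nat.le_of_lt_succ <| Nat.lt_of_mul_lt_mul_right (a := q) <| by
        rw [Nat.succ_mul]; omega
      refine ⟨e - d₂, d₂, by omega, fun _ => by omega, fun _ => ?_⟩
      rw [Nat.sub_add_cancel hle]
      omega
    · exact ⟨e, 0, by omega, by omega, fun h => by have := h₃ h; rw [add_zero]; omega⟩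
  have h₁ := h₁ hN₁
  rcases h2N.lt_or_eq with hN₂ | rfl
  · have h₂ := h₂ hN₂
    refine ⟨d₁, d₂, fun _ => by omega, fun _ => by omega, fun _ => ?_⟩
    rw [add_mul]
    omega
  rcases h12.lt_or_eq with h12 | rfl
  · -- the right block is empty, so `d₂` is read off the middle block
    have h₃ := h₃ h12
    have hle : d₁ ≤ e := (Nat.lt_of_mul_lt_mul_right (a := q) (by omega)).le
    refine ⟨d₁, e - d₁, fun _ => by omega, by omega, fun _ => ?_⟩
    rw [Nat.add_sub_cancel' hle]
    omega
  · exact ⟨d₁, 0, fun _ => by omega, by omega, by omega⟩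

theorem discrete_three_gap_interval_exchange_general (q' N r τ₁ τ₂ N₁ N₂ : ℕ)
    (hNq : N < q')
    (hcop : Nat.Coprime r q')
    (hτ₁ : 0 < τ₁) (hτ₂ : 0 < τ₂) (h12 : N₁ ≤ N₂) (h2N : N₂ ≤ N)
    (τ : ℕ → ℕ)
    (hτ : ∀ m, m < N → 1 ≤ τ m ∧ (m + τ m * r) % q' < N ∧
      ∀ ℓ, 1 ≤ ℓ → (m + ℓ * r) % q' < N → τ m ≤ ℓ)
    (hstruct : ∀ m, m < N → τ m = if m < N₁ then τ₁ else if m < N₂ then τ₁ + τ₂ else τ₂) :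
    ∃ d₁ d₂ : ℕ,
      (fun m => m + τ₁ * r) '' Set.Ico 0 N₁ = (fun m => m + d₁ * q') '' Set.Ico (N - N₁) N ∧
      (fun m => m + τ₂ * r) '' Set.Ico N₂ N = (fun m => m + d₂ * q') '' Set.Ico 0 (N - N₂) ∧
      (fun m => m + (τ₁ + τ₂) * r) '' Set.Ico N₁ N₂
        = (fun m => m + (d₁ + d₂) * q') '' Set.Ico (N - N₂) (N - N₁) := by
  have hs : HasThreeGapStructure N N₁ N₂ τ₁ τ₂ τ := hstruct
  obtain ⟨d₁, d₂, h₁, h₂, h₃⟩ := exists_block_quotients hNq h12 h2N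
    (hs.left_shift hτ hNq hcop hτ₂ h12 h2N) (hs.right_shift hτ hNq hcop hτ₁ h12 h2N)
    (fun h => by rw [← add_mul]; exact hs.middle_shift hτ hNq hcop hτ₁ hτ₂ h h2N)
  refine ⟨d₁, d₂, Nat.image_add_const_Ico_eq (by omega) fun h => ?_,
    Nat.image_add_const_Ico_eq (by omega) fun h => ?_,
    Nat.image_add_const_Ico_eq (by omega) fun h => ?_⟩
  · rw [zero_add, h₁ h]
  · rw [zero_add, h₂ (by omega)]
  · rw [add_mul, h₃ h]

theorem discrete_three_gap_interval_exchange (q' N r τ₁ τ₂ N₁ N₂ : ℕ)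
    (hN : 1 ≤ N) (hNq : N < q') (hr0 : 0 < r) (hr1 : r < q')
    (hcop : Nat.Coprime r q')
    (hτ₁ : 0 < τ₁) (hτ₂ : 0 < τ₂) (h12 : N₁ ≤ N₂) (h2N : N₂ ≤ N)
    (τ : ℕ → ℕ)
    (hτ : ∀ m, m < N → 1 ≤ τ m ∧ (m + τ m * r) % q' < N ∧
      ∀ ℓ, 1 ≤ ℓ → (m + ℓ * r) % q' < N → τ m ≤ ℓ)
    (hstruct : ∀ m, m < N → τ m = if m < N₁ then τ₁ else if m < N₂ then τ₁ + τ₂ else τ₂) :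
    ∃ d₁ d₂ : ℕ,
      (fun m => m + τ₁ * r) '' Set.Ico 0 N₁ = (fun m => m + d₁ * q') '' Set.Ico (N - N₁) N ∧
      (fun m => m + τ₂ * r) '' Set.Ico N₂ N = (fun m => m + d₂ * q') '' Set.Ico 0 (N - N₂) ∧
      (fun m => m + (τ₁ + τ₂) * r) '' Set.Ico N₁ N₂
        = (fun m => m + (d₁ + d₂) * q') '' Set.Ico (N - N₂) (N - N₁) :=
  discrete_three_gap_interval_exchange_general q' N r τ₁ τ₂ N₁ N₂ hNq hcop hτ₁ hτ₂ h12 h2N τ hτ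
    hstruct
end

section
/- Let α, β be reals with 1, α, β rationally independent, let N, q_k be positive integers with N = a·q_k + R, a ≥ 1, 1 ≤ R ≤ q_k, and suppose every gap of the point set E_{q_k,N} = {nα+mβ mod 1 : 0 ≤ n < q_k, 0 ≤ m < N} is strictly greater than a·‖q_kα‖. Then the gap set of E_N = {nα+mβ mod 1 : 0 ≤ n,m < N} consists of ‖q_kα‖ together with values of the form Δ − a‖q_kα‖ or Δ − (a−1)‖q_kα‖ where Δ ranges over gaps of E_{q_k,N}; in particular #Δ(E_N) ≤ 1 + 2·#Δ(E_{q_k,N}). -/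
noncomputable section

/-- the set of points `nα + mβ mod 1` with `0 ≤ n < q`, `0 ≤ m < q'` -/
def Epts (α β : ℝ) (q q' : ℕ) : Set (AddCircle (1 : ℝ)) :=
  {x | ∃ n m : ℕ, n < q ∧ m < q' ∧ x = (((n : ℝ) * α + (m : ℝ) * β : ℝ) : AddCircle (1 : ℝ))}

/-- the (clockwise) distance from `x` to the next point of `E` -/
def gapOf (E : Set (AddCircle (1 : ℝ))) (x : AddCircle (1 : ℝ)) : ℝ :=
  sInf {t : ℝ | 0 < t ∧ x + ((t : ℝ) : AddCircle (1 : ℝ)) ∈ E}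

/-- the set of gap lengths between neighboring points of `E` -/
def gapSet (E : Set (AddCircle (1 : ℝ))) : Set ℝ := gapOf E '' E

open Set

local notation "𝕋" => AddCircle (1 : ℝ)

section Gaps

variable {E : Set 𝕋} {x y z : 𝕋}

/-- The infimum is attained: only finitely many `t ∈ (0, 1]` are candidates, and `t = 1` is one. -/
lemma gapOf_isLeast (hE : E.Finite) (hx : x ∈ E) :
    IsLeast {t : ℝ | 0 < t ∧ x + (t : 𝕋) ∈ E} (gapOf E x) := by
  set S := {t : ℝ | 0 < t ∧ x + (t : 𝕋) ∈ E}
  have hfin : (S ∩ Ioc 0 1).Finite := by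
    refine Finite.of_finite_image (f := fun t : ℝ => x + (t : 𝕋)) (hE.subset ?_) ?_
    · rintro _ ⟨t, ⟨⟨-, ht⟩, -⟩, rfl⟩
      exact ht
    · intro s hs t ht hst
      exact (AddCircle.coe_eq_coe_iff_of_mem_Ioc (p := (1 : ℝ)) (a := 0) (by simpa using hs.2)
        (by simpa using ht.2)).1 (add_left_cancel hst)
  have hone : (1 : ℝ) ∈ S ∩ Ioc 0 1 :=
    ⟨⟨one_pos, by rwa [AddCircle.coe_period, add_zero]⟩, one_pos, le_rfl⟩
  obtain ⟨m, hm, hmin⟩ := exists_min_image _ id hfin ⟨1, hone⟩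
  have hleast : IsLeast S m := by
    refine ⟨hm.1, fun t ht => ?_⟩
    rcases le_or_gt t 1 with h | h
    · exact hmin t ⟨ht, ht.1, h⟩
    · exact (hmin 1 hone).trans h.le
  rwa [gapOf, hleast.csInf_eq]

lemma gapOf_pos (hE : E.Finite) (hx : x ∈ E) : 0 < gapOf E x :=
  (gapOf_isLeast hE hx).1.1

lemma add_gapOf_mem (hE : E.Finite) (hx : x ∈ E) : x + (gapOf E x : 𝕋) ∈ E :=
  (gapOf_isLeast hE hx).1.2

lemma gapOf_le (hE : E.Finite) (hx : x ∈ E) {t : ℝ} (ht : 0 < t) (hmem : x + (t : 𝕋) ∈ E) :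
    gapOf E x ≤ t :=
  (gapOf_isLeast hE hx).2 ⟨ht, hmem⟩

lemma add_notMem_of_lt_gapOf (hE : E.Finite) (hx : x ∈ E) {t : ℝ} (ht0 : 0 < t)
    (ht : t < gapOf E x) : x + (t : 𝕋) ∉ E :=
  fun hmem => (gapOf_le hE hx ht0 hmem).not_gt ht

lemma add_coe_sub_eq_of_add_coe_eq {y z : 𝕋} {s t : ℝ} (h : z + (t : 𝕋) = y + (s : 𝕋)) :
    y + ((s - t : ℝ) : 𝕋) = z := by
  rw [AddCircle.coe_sub, ← add_sub_assoc, ← h, add_sub_cancel_right]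

lemma eq_of_add_eq_add_of_lt_gapOf (hE : E.Finite) (hz : z ∈ E) (hy : y ∈ E) {t s : ℝ}
    (ht0 : 0 ≤ t) (ht : t < gapOf E z) (hs0 : 0 ≤ s) (hs : s < gapOf E y)
    (h : z + (t : 𝕋) = y + (s : 𝕋)) : z = y ∧ t = s := by
  rcases lt_trichotomy t s with hts | rfl | hts
  · exact absurd (add_coe_sub_eq_of_add_coe_eq h ▸ hz)
      (add_notMem_of_lt_gapOf hE hy (by linarith) (by linarith))
  · exact ⟨add_right_cancel h, rfl⟩
  · exact absurd (add_coe_sub_eq_of_add_coe_eq h.symm ▸ hy)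
      (add_notMem_of_lt_gapOf hE hz (by linarith) (by linarith))

lemma injOn_add_gapOf (hE : E.Finite) : InjOn (fun y => y + (gapOf E y : 𝕋)) E := by
  intro y hy y' hy' (h : y + _ = y' + _)
  rcases lt_trichotomy (gapOf E y) (gapOf E y') with hlt | heq | hlt
  · exact absurd (add_coe_sub_eq_of_add_coe_eq h ▸ hy)
      (add_notMem_of_lt_gapOf hE hy' (by linarith) (by linarith [gapOf_pos hE hy]))
  · exact add_right_cancel (heq ▸ h)
  · exact absurd (add_coe_sub_eq_of_add_coe_eq h.symm ▸ hy')
      (add_notMem_of_lt_gapOf hE hy (by linarith) (by linarith [gapOf_pos hE hy']))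

lemma surjOn_add_gapOf (hE : E.Finite) : SurjOn (fun y => y + (gapOf E y : 𝕋)) E E :=
  ((hE.injOn_iff_bijOn_of_mapsTo fun _ hy => add_gapOf_mem hE hy).1 (injOn_add_gapOf hE)).surjOn

/-- Reflection turns the gap following `y` into the gap preceding `-y`. -/
lemma gapOf_neg_add_gapOf (hE : E.Finite) (hy : y ∈ E) :
    gapOf (-E) (-(y + (gapOf E y : 𝕋))) = gapOf E y := by
  have hleast : IsLeast {t : ℝ | 0 < t ∧ -(y + (gapOf E y : 𝕋)) + (t : 𝕋) ∈ -E} (gapOf E y) := by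
    refine ⟨⟨gapOf_pos hE hy, by simpa using hy⟩, fun t ⟨ht, hmem⟩ => not_lt.1 fun hlt => ?_⟩
    have hsub : y + ((gapOf E y - t : ℝ) : 𝕋) = -(-(y + (gapOf E y : 𝕋)) + (t : 𝕋)) := by
      rw [AddCircle.coe_sub]; abel
    exact add_notMem_of_lt_gapOf hE hy (by linarith) (by linarith) (hsub ▸ mem_neg.1 hmem)
  rw [gapOf, hleast.csInf_eq]

lemma gapSet_neg (hE : E.Finite) : gapSet (-E) = gapSet E := by
  ext d
  constructor
  · rintro ⟨w, hw, rfl⟩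
    obtain ⟨y, hy, hyw⟩ := surjOn_add_gapOf hE (mem_neg.1 hw)
    rw [← neg_neg w, ← hyw, gapOf_neg_add_gapOf hE hy]
    exact ⟨y, hy, rfl⟩
  · rintro ⟨y, hy, rfl⟩
    exact ⟨_, by simpa using add_gapOf_mem hE hy, gapOf_neg_add_gapOf hE hy⟩

end Gaps

def tower (E : Set 𝕋) (L : 𝕋 → ℕ) (θ : ℝ) : Set 𝕋 :=
  {x | ∃ y ∈ E, ∃ j ≤ L y, x = y + ((j * θ : ℝ) : 𝕋)}

section Tower

variable {E : Set 𝕋} {L : 𝕋 → ℕ} {θ : ℝ} {y : 𝕋} {j : ℕ}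

lemma mem_tower (hy : y ∈ E) (hj : j ≤ L y) : y + ((j * θ : ℝ) : 𝕋) ∈ tower E L θ :=
  ⟨y, hy, j, hj, rfl⟩

lemma tower_finite (hE : E.Finite) (L : 𝕋 → ℕ) (θ : ℝ) : (tower E L θ).Finite := by
  refine (hE.biUnion fun y _ =>
    (finite_Iic (L y)).image fun j : ℕ => y + ((j * θ : ℝ) : 𝕋)).subset ?_
  rintro _ ⟨y, hy, j, hj, rfl⟩
  exact mem_biUnion hy ⟨j, hj, rfl⟩

lemma subset_tower : E ⊆ tower E L θ := fun y hy => by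
  simpa using mem_tower (L := L) (θ := θ) hy (Nat.zero_le _)

lemma exists_level_of_add_mem_tower (hE : E.Finite) (hθ : 0 < θ)
    (hL : ∀ y ∈ E, L y * θ < gapOf E y) (hy : y ∈ E) {g : ℝ} (hg0 : 0 < g)
    (hg : j * θ + g < gapOf E y) (hmem : y + ((j * θ + g : ℝ) : 𝕋) ∈ tower E L θ) :
    ∃ i, j < i ∧ i ≤ L y ∧ g = (i - j) * θ := by
  obtain ⟨z, hz, i, hi, he⟩ := hmem
  have hiz : (i : ℝ) * θ < gapOf E z :=
    lt_of_le_of_lt (by gcongr) (hL z hz)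
  obtain ⟨rfl, hij⟩ := eq_of_add_eq_add_of_lt_gapOf hE hy hz
    (by positivity) hg (by positivity) hiz he
  have hji : (j : ℝ) < i := by nlinarith
  exact ⟨i, by exact_mod_cast hji, hi, by linarith⟩

lemma gapOf_tower_of_lt (hE : E.Finite) (hθ : 0 < θ) (hL : ∀ y ∈ E, L y * θ < gapOf E y)
    (hy : y ∈ E) (hj : j < L y) : gapOf (tower E L θ) (y + ((j * θ : ℝ) : 𝕋)) = θ := by
  have hT := tower_finite hE L θ
  have hx := mem_tower (θ := θ) hy hj.le
  have hnext : y + ((j * θ : ℝ) : 𝕋) + (θ : 𝕋) ∈ tower E L θ := by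
    simpa [add_mul, add_assoc] using mem_tower (θ := θ) hy hj
  refine le_antisymm (gapOf_le hT hx hθ hnext) (not_lt.1 fun hlt => ?_)
  set g := gapOf (tower E L θ) (y + ((j * θ : ℝ) : 𝕋))
  have hjL : ((j + 1 : ℕ) : ℝ) ≤ L y := by exact_mod_cast hj
  have hg : j * θ + g < gapOf E y := by
    push_cast at hjL
    nlinarith [hL y hy]
  obtain ⟨i, hji, -, hgi⟩ := exists_level_of_add_mem_tower hE hθ hL hy (gapOf_pos hT hx) hg
    (by simpa [add_assoc] using add_gapOf_mem hT hx)
  have hji' : (j : ℝ) + 1 ≤ i := by exact_mod_cast hji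
  nlinarith

lemma gapOf_tower_top (hE : E.Finite) (hθ : 0 < θ) (hL : ∀ y ∈ E, L y * θ < gapOf E y)
    (hy : y ∈ E) :
    gapOf (tower E L θ) (y + ((L y * θ : ℝ) : 𝕋)) = gapOf E y - L y * θ := by
  have hT := tower_finite hE L θ
  have hx := mem_tower (L := L) (θ := θ) hy le_rfl
  have hnext : y + ((L y * θ : ℝ) : 𝕋) + ((gapOf E y - L y * θ : ℝ) : 𝕋) ∈ tower E L θ := by
    rw [add_assoc, ← AddCircle.coe_add, add_sub_cancel]
    exact subset_tower (add_gapOf_mem hE hy)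
  refine le_antisymm (gapOf_le hT hx (sub_pos.2 (hL y hy)) hnext) (not_lt.1 fun hlt => ?_)
  obtain ⟨i, hLi, hiL, -⟩ := exists_level_of_add_mem_tower hE hθ hL hy (gapOf_pos hT hx)
    (by linarith) (by simpa [add_assoc] using add_gapOf_mem hT hx)
  omega

lemma gapSet_tower_subset (hE : E.Finite) (hθ : 0 < θ) (hL : ∀ y ∈ E, L y * θ < gapOf E y) :
    gapSet (tower E L θ) ⊆ insert θ ((fun y => gapOf E y - L y * θ) '' E) := by
  rintro _ ⟨_, ⟨y, hy, j, hj, rfl⟩, rfl⟩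
  rcases hj.lt_or_eq with hj | rfl
  · exact Or.inl (gapOf_tower_of_lt hE hθ hL hy hj)
  · exact Or.inr ⟨y, hy, (gapOf_tower_top hE hθ hL hy).symm⟩

end Tower

section Epts

variable {α β θ : ℝ} {q a R M : ℕ}

lemma Epts_finite (α β : ℝ) (q M : ℕ) : (Epts α β q M).Finite := by
  refine (((finite_Iio q).prod (finite_Iio M)).image
    fun nm : ℕ × ℕ => (((nm.1 : ℝ) * α + (nm.2 : ℝ) * β : ℝ) : 𝕋)).subset ?_
  rintro _ ⟨n, m, hn, hm, rfl⟩
  exact ⟨(n, m), ⟨hn, hm⟩, rfl⟩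

lemma Epts_neg (α β : ℝ) (q M : ℕ) : Epts (-α) (-β) q M = -Epts α β q M := by
  ext x
  have hneg : ∀ n m : ℕ, (((n : ℝ) * -α + (m : ℝ) * -β : ℝ) : 𝕋)
      = -(((n : ℝ) * α + (m : ℝ) * β : ℝ) : 𝕋) := fun n m => by
    rw [← AddCircle.coe_neg]; ring_nf
  simp only [Epts, mem_ofPred_eq, mem_neg, hneg, neg_eq_iff_eq_neg]

lemma gapSet_Epts_neg (α β : ℝ) (q M : ℕ) :
    gapSet (Epts (-α) (-β) q M) = gapSet (Epts α β q M) := by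
  rw [Epts_neg, gapSet_neg (Epts_finite α β q M)]

lemma coe_mul_add_eq_of_coe_mul_eq (hθ : ((q * α : ℝ) : 𝕋) = θ) (j r m : ℕ) :
    ((((j * q + r : ℕ) : ℝ) * α + m * β : ℝ) : 𝕋) =
      ((r * α + m * β : ℝ) : 𝕋) + ((j * θ : ℝ) : 𝕋) := by
  calc ((((j * q + r : ℕ) : ℝ) * α + m * β : ℝ) : 𝕋)
      = ((r * α + m * β : ℝ) : 𝕋) + ((j • (q * α) : ℝ) : 𝕋) := by
        rw [← AddCircle.coe_add, nsmul_eq_mul]; push_cast; ring_nf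
    _ = _ := by rw [AddCircle.coe_nsmul, hθ, ← AddCircle.coe_nsmul, nsmul_eq_mul]

open Classical in
lemma Epts_eq_tower (ha : 1 ≤ a) (hR : R ≤ q) (hθ : ((q * α : ℝ) : 𝕋) = θ) :
    Epts α β (a * q + R) M =
      tower (Epts α β q M) (fun y => if y ∈ Epts α β R M then a else a - 1) θ := by
  have hlow : ∀ j < a, ∀ r < q, ∀ m < M,
      ((r * α + m * β : ℝ) : 𝕋) + ((j * θ : ℝ) : 𝕋) ∈ Epts α β (a * q + R) M := by
    intro j hj r hr m hm
    have : (j + 1) * q ≤ a * q := Nat.mul_le_mul_right q hj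
    exact ⟨j * q + r, m, by nlinarith, hm, (coe_mul_add_eq_of_coe_mul_eq hθ j r m).symm⟩
  ext x
  constructor
  · rintro ⟨n, m, hn, hm, rfl⟩
    have hq : 0 < q := Nat.pos_of_ne_zero fun h => by subst h; omega
    have hn' : n / q < a + 1 := (Nat.div_lt_iff_lt_mul hq).2 (by nlinarith)
    refine ⟨_, ⟨n % q, m, Nat.mod_lt _ hq, hm, rfl⟩, n / q, ?_,
      by rw [← coe_mul_add_eq_of_coe_mul_eq hθ, Nat.div_add_mod']⟩
    dsimp only
    split_ifs with hnR
    · omega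
    · refine Nat.le_sub_one_of_lt (lt_of_le_of_ne (by omega) fun hna => hnR ?_)
      refine ⟨n % q, m, ?_, hm, rfl⟩
      have := Nat.div_add_mod' n q
      rw [hna] at this
      omega
  · rintro ⟨_, ⟨r, m, hr, hm, rfl⟩, j, hj, rfl⟩
    dsimp only at hj
    split_ifs at hj with hyR
    · rcases hj.lt_or_eq with hj | rfl
      · exact hlow j hj r hr m hm
      · obtain ⟨r', m', hr', hm', hy⟩ := hyR
        rw [hy]
        exact ⟨j * q + r', m', by omega, hm', (coe_mul_add_eq_of_coe_mul_eq hθ j r' m').symm⟩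
    · exact hlow j (by omega) r hr m hm

lemma gapSet_Epts_subset (ha : 1 ≤ a) (hR : R ≤ q) (hθ0 : 0 < θ) (hθ : ((q * α : ℝ) : 𝕋) = θ)
    (hgap : ∀ d ∈ gapSet (Epts α β q M), a * θ < d) :
    gapSet (Epts α β (a * q + R) M) ⊆
      {θ} ∪ (fun d => d - a * θ) '' gapSet (Epts α β q M)
        ∪ (fun d => d - (a - 1) * θ) '' gapSet (Epts α β q M) := by
  classical
  rw [Epts_eq_tower ha hR hθ]
  refine (gapSet_tower_subset (Epts_finite α β q M) hθ0 fun y hy => ?_).trans ?_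
  · have hLa : ((if y ∈ Epts α β R M then a else a - 1 : ℕ) : ℝ) ≤ a := by
      exact_mod_cast (by split_ifs <;> omega)
    exact (mul_le_mul_of_nonneg_right hLa hθ0.le).trans_lt (hgap _ ⟨y, hy, rfl⟩)
  · rintro _ (rfl | ⟨y, hy, rfl⟩)
    · exact Or.inl (Or.inl rfl)
    · dsimp only
      split_ifs
      · exact Or.inl (Or.inr ⟨_, ⟨y, hy, rfl⟩, rfl⟩)
      · exact Or.inr ⟨_, ⟨y, hy, rfl⟩, by rw [Nat.cast_sub ha, Nat.cast_one]⟩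

end Epts

lemma nint_pos {t : ℝ} (ht : ∀ n : ℤ, t ≠ n) : 0 < nint t :=
  abs_pos.2 (sub_ne_zero.2 (ht _))

lemma coe_eq_nint_or_coe_neg_eq_nint (t : ℝ) :
    (t : 𝕋) = (nint t : 𝕋) ∨ ((-t : ℝ) : 𝕋) = (nint t : 𝕋) := by
  have hround : ((round t : ℝ) : 𝕋) = 0 := (AddCircle.coe_eq_zero_iff 1).2 ⟨round t, by simp⟩
  rcases abs_choice (t - round t) with h | h
  · left
    rw [nint, h, AddCircle.coe_sub, hround, sub_zero]
  · right
    rw [nint, h, neg_sub, AddCircle.coe_sub, hround, zero_sub, AddCircle.coe_neg]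

lemma ncard_le_one_add_two_mul {X Y : Type*} {S : Set Y} {A : Set X} (hA : A.Finite) {c : Y}
    {f g : X → Y} (h : S ⊆ {c} ∪ f '' A ∪ g '' A) : S.ncard ≤ 1 + 2 * A.ncard :=
  calc S.ncard ≤ ({c} ∪ f '' A ∪ g '' A).ncard :=
        ncard_le_ncard h (((finite_singleton c).union (hA.image f)).union (hA.image g))
    _ ≤ ({c} ∪ f '' A).ncard + (g '' A).ncard := ncard_union_le _ _
    _ ≤ ({c} : Set Y).ncard + (f '' A).ncard + (g '' A).ncard := by
        gcongr; exact ncard_union_le _ _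
    _ ≤ 1 + A.ncard + A.ncard := by
        rw [ncard_singleton]; gcongr <;> exact ncard_image_le hA
    _ = 1 + 2 * A.ncard := by ring

theorem exduction_gap_bound (α β : ℝ)
    (hind : ∀ n₀ n₁ n₂ : ℤ, (n₀ : ℝ) + n₁ * α + n₂ * β = 0 → n₀ = 0 ∧ n₁ = 0 ∧ n₂ = 0)
    (N qk a R : ℕ) (ha : 1 ≤ a) (hR1 : 1 ≤ R) (hR2 : R ≤ qk) (hN : N = a * qk + R)
    (hgap : ∀ d ∈ gapSet (Epts α β qk N), (a : ℝ) * nint ((qk : ℝ) * α) < d) :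
    gapSet (Epts α β N N) ⊆
      ({nint ((qk : ℝ) * α)} : Set ℝ)
        ∪ ((fun d => d - (a : ℝ) * nint ((qk : ℝ) * α)) '' gapSet (Epts α β qk N))
        ∪ ((fun d => d - ((a : ℝ) - 1) * nint ((qk : ℝ) * α)) '' gapSet (Epts α β qk N)) ∧
    (gapSet (Epts α β N N)).ncard ≤ 1 + 2 * (gapSet (Epts α β qk N)).ncard := by
  have hθ : 0 < nint (qk * α) := nint_pos fun n hn => by
    have := (hind (-n) qk 0 (by push_cast; linarith)).2.1
    omega
  have hsub : gapSet (Epts α β N N) ⊆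
      {nint (qk * α)} ∪ (fun d => d - a * nint (qk * α)) '' gapSet (Epts α β qk N)
        ∪ (fun d => d - (a - 1) * nint (qk * α)) '' gapSet (Epts α β qk N) := by
    subst hN
    rcases coe_eq_nint_or_coe_neg_eq_nint (qk * α) with h | h
    · exact gapSet_Epts_subset ha hR2 hθ h hgap
    · have := gapSet_Epts_subset (α := -α) (β := -β) ha hR2 hθ (by rwa [mul_neg])
        (by rwa [gapSet_Epts_neg])
      rwa [gapSet_Epts_neg, gapSet_Epts_neg] at this
  exact ⟨hsub, ncard_le_one_add_two_mul ((Epts_finite _ _ _ _).image _) hsub⟩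
end
end
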